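/- arXiv:1301.2192 — 10 statements merged into one kernel-verified Lean document; each statement's English description precedes it below -/
import Mathlib

section
/- Let (X, Φ) be a finite-dimensional nondegenerate bilinear space over a field F of characteristic not 2, with Φ symmetric or antisymmetric, and let γ be a semisimple isometry of X. Then the fixed point space X^γ = {x ∈ X : γx = x} is nondegenerate with respect to Φ. -/
/-! For semisimple `γ`, the range of `γ - 1` has a `γ`-invariant complement, which `γ - 1`
must kill; hence `X = X^γ + (γ - 1)X`. An invariant form pairs a fixed vector `x` trivially with
`γw - w`, since `Φ x (γw) = Φ (γx) (γw) = Φ x w`. So a fixed vector orthogonal to `X^γ` is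
orthogonal to all of `X`. -/

open LinearMap (ker range mem_range_self)

theorem Module.End.IsSemisimple.ker_sup_range_eq_top {R M : Type*} [CommRing R]
    [AddCommGroup M] [Module R M] {f : Module.End R M} (hf : f.IsSemisimple) :
    ker f ⊔ range f = ⊤ := by
  obtain ⟨q, hq, hcompl⟩ := isSemisimple_iff.mp hf (range f)
    ((mem_invtSubmodule_iff_forall_mem_of_mem f).mpr fun x _ ↦ mem_range_self f x)
  have hq_ker : q ≤ ker f := fun x hx ↦ by
    have : f x ∈ range f ⊓ q := ⟨mem_range_self f x, hq hx⟩
    simpa [hcompl.inf_eq_bot] using this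
  rw [eq_top_iff, ← hcompl.sup_eq_top]
  exact sup_le le_sup_right (hq_ker.trans le_sup_left)

theorem apply_eq_zero_of_mem_ker_sub_id_of_mem_range_sub_id {R M : Type*} [CommRing R]
    [AddCommGroup M] [Module R M] {Φ : M →ₗ[R] M →ₗ[R] R} {γ : Module.End R M}
    (hγ : ∀ x y, Φ (γ x) (γ y) = Φ x y) {x y : M} (hx : x ∈ ker (γ - LinearMap.id))
    (hy : y ∈ range (γ - LinearMap.id)) : Φ x y = 0 := by
  obtain ⟨w, rfl⟩ := hy
  have hx' : γ x = x := sub_eq_zero.mp hx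
  simp only [LinearMap.sub_apply, LinearMap.id_apply, map_sub]
  rw [← hγ x w, hx', sub_self]

theorem fixed_space_nondegenerate_general
    (F : Type*) [Field F]
    (X : Type*) [AddCommGroup X] [Module F X]
    (Φ : X →ₗ[F] X →ₗ[F] F)
    (hΦnd : ∀ x : X, (∀ y : X, Φ x y = 0) → x = 0)
    (γ : X →ₗ[F] X)
    (hγiso : ∀ x y : X, Φ (γ x) (γ y) = Φ x y)
    (hγss : Squarefree (minpoly F γ)) :
    ∀ x ∈ LinearMap.ker (γ - LinearMap.id),
      (∀ y ∈ LinearMap.ker (γ - LinearMap.id), Φ x y = 0) → x = 0 := by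
  intro x hx hperp
  have hss : Module.End.IsSemisimple (γ - LinearMap.id) := by
    simpa [← Module.End.one_eq_id] using
      (Module.End.isSemisimple_sub_algebraMap_iff (μ := (1 : F))).mpr
        (Module.End.isSemisimple_of_squarefree_aeval_eq_zero hγss (minpoly.aeval F γ))
  refine hΦnd x fun y ↦ ?_
  have hy : y ∈ ker (γ - LinearMap.id) ⊔ range (γ - LinearMap.id) := by
    rw [hss.ker_sup_range_eq_top]; exact Submodule.mem_top
  obtain ⟨k, hk, r, hr, rfl⟩ := Submodule.mem_sup.mp hy
  rw [map_add, hperp k hk, apply_eq_zero_of_mem_ker_sub_id_of_mem_range_sub_id hγiso hx hr,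
    add_zero]

/-- Let `(X, Φ)` be a finite-dimensional nondegenerate bilinear space over a field `F` of
characteristic not 2, with `Φ` symmetric or antisymmetric, and let `γ` be a semisimple
isometry of `X` (semisimple meaning the minimal polynomial of `γ` is squarefree).  Then the
fixed point space `X^γ = ker (γ - 1)` is nondegenerate with respect to `Φ`. -/
theorem fixed_space_nondegenerate
    (F : Type*) [Field F] (hchar : (2 : F) ≠ 0)
    (X : Type*) [AddCommGroup X] [Module F X] [FiniteDimensional F X]
    (Φ : X →ₗ[F] X →ₗ[F] F)
    (hΦnd : ∀ x : X, (∀ y : X, Φ x y = 0) → x = 0)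
    (hΦsym : (∀ x y : X, Φ x y = Φ y x) ∨ (∀ x y : X, Φ x y = - Φ y x))
    (γ : X →ₗ[F] X)
    (hγbij : Function.Bijective γ)
    (hγiso : ∀ x y : X, Φ (γ x) (γ y) = Φ x y)
    (hγss : Squarefree (minpoly F γ)) :
    ∀ x ∈ LinearMap.ker (γ - LinearMap.id),
      (∀ y ∈ LinearMap.ker (γ - LinearMap.id), Φ x y = 0) → x = 0 :=
  fixed_space_nondegenerate_general F X Φ hΦnd γ hγiso hγss
end

section
/- Let (X, Φ) be a finite-dimensional nondegenerate bilinear space (symmetric or antisymmetric) over a field F of characteristic not 2, and let S be a set of semisimple isometries of X that pairwise commute (e.g. a torus of the isometry group). Then the common fixed point space X^S = {x ∈ X : sx = x for all s ∈ S} is nondegenerate. -/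
/-!
Let `U` be the span of the ranges of the operators `s - 1`, `s ∈ S`. An isometry `s` gives
`Φ x (s y - y) = Φ (s x) (s y) - Φ x y = 0` for `x` fixed by `s`, so `X^S` is orthogonal to `U`.
Hence a vector of `X^S` orthogonal to `X^S` is orthogonal to `X^S + U`, and it suffices to show
`X^S + U = X`. For a single semisimple `t` and a `t`-invariant subspace `V`, Bézout in `F[X]`
splits `V` into the fixed vectors of `t` in `V` plus vectors of `range (t - 1)`. A minimal
`S`-invariant `V` with `V + U = X` (it exists in finite dimension) must therefore be fixed by
every `s ∈ S`, since `V ∩ ker (s - 1)` is again `S`-invariant by commutativity.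
-/

open Polynomial LinearMap

lemma exists_mul_add_eq_one_and_dvd_mul_of_squarefree {R : Type*} [CommRing R] [IsDomain R]
    [IsBezout R] {π p : R} (hπ : Prime π) (hp : Squarefree p) :
    ∃ a c : R, π * a + c = 1 ∧ p ∣ π * c := by
  by_cases hπp : π ∣ p
  · obtain ⟨q, rfl⟩ := hπp
    have hπq : IsCoprime π q := hπ.coprime_iff_not_dvd.2 fun hq =>
      hπ.not_isUnit (hp π (mul_dvd_mul_left π hq))
    obtain ⟨a, b, hab⟩ := hπq
    exact ⟨a, b * q, by rw [← hab]; ring, ⟨b, by ring⟩⟩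
  · obtain ⟨a, b, hab⟩ := hπ.coprime_iff_not_dvd.2 hπp
    exact ⟨a, b * p, by rw [← hab]; ring, ⟨π * b, by ring⟩⟩

namespace Module.End

variable {R M : Type*}

lemma aeval_apply_mem_of_mem_invtSubmodule [CommRing R] [AddCommGroup M] [Module R M]
    {t : End R M} {V : Submodule R M} (hV : V ∈ t.invtSubmodule) (p : R[X]) {x : M}
    (hx : x ∈ V) : aeval t p x ∈ V := by
  induction p using Polynomial.induction_on generalizing x with
  | C a => simpa using V.smul_mem a hx
  | add p q hp hq => simpa using V.add_mem (hp hx) (hq hx)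
  | monomial n a ih =>
    rw [pow_succ, ← mul_assoc, map_mul, aeval_X, mul_apply]
    exact ih (hV hx)

lemma ker_mem_invtSubmodule_of_commute [Semiring R] [AddCommMonoid M] [Module R M]
    {f g : End R M} (h : Commute f g) : ker f ∈ g.invtSubmodule := fun x hx => by
  rw [Submodule.mem_comap, mem_ker, ← mul_apply, h.eq, mul_apply, mem_ker.1 hx, map_zero]

variable {F : Type*} [Field F] [AddCommGroup M] [Module F M]

lemma le_inf_ker_sub_one_sup_range_sub_one {t : End F M} (ht : Squarefree (minpoly F t))
    {V : Submodule F M} (hV : V ∈ t.invtSubmodule) :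
    V ≤ V ⊓ ker (t - 1) ⊔ range (t - 1) := by
  obtain ⟨a, c, hac, hdvd⟩ :=
    exists_mul_add_eq_one_and_dvd_mul_of_squarefree (prime_X_sub_C (1 : F)) ht
  have haeval_sub_one : aeval t (X - C 1 : F[X]) = t - 1 := by simp
  have hc : (t - 1) * aeval t c = 0 := by
    rw [← haeval_sub_one, ← map_mul]
    exact aeval_eq_zero_of_dvd_aeval_eq_zero hdvd (minpoly.aeval F t)
  intro x hx
  have hsplit : x = aeval t c x + (t - 1) (aeval t a x) := by
    have := LinearMap.congr_fun (congrArg (aeval t) hac) x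
    rw [map_add, map_mul, haeval_sub_one, map_one, LinearMap.add_apply, mul_apply,
      one_apply] at this
    rw [add_comm, this]
  rw [hsplit]
  refine Submodule.add_mem_sup
    (Submodule.mem_inf.2 ⟨aeval_apply_mem_of_mem_invtSubmodule hV c hx, ?_⟩) (mem_range_self _ _)
  rw [mem_ker, ← mul_apply, hc, LinearMap.zero_apply]

lemma mem_iInf_ker_sub_one {S : Set (End F M)} {x : M} :
    x ∈ ⨅ s ∈ S, ker (s - 1) ↔ ∀ s ∈ S, s x = x := by
  simp [sub_eq_zero]

lemma iInf_ker_sub_one_sup_iSup_range_sub_one_eq_top [FiniteDimensional F M]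
    {S : Set (End F M)} (hcomm : ∀ s ∈ S, ∀ t ∈ S, Commute s t)
    (hss : ∀ s ∈ S, Squarefree (minpoly F s)) :
    (⨅ s ∈ S, ker (s - 1)) ⊔ (⨆ s ∈ S, range (s - 1)) = ⊤ := by
  set U := ⨆ s ∈ S, range (s - 1)
  obtain ⟨V, ⟨hVinv, hVU⟩, hmin⟩ := wellFounded_lt.has_min
    {V : Submodule F M | (∀ s ∈ S, V ∈ s.invtSubmodule) ∧ V ⊔ U = ⊤}
    ⟨⊤, fun s _ => invtSubmodule.top_mem s, top_sup_eq U⟩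
  have hVfix : V ≤ ⨅ s ∈ S, ker (s - 1) := by
    refine le_iInf₂ fun s hs => ?_
    by_contra hV
    have hinv : ∀ r ∈ S, V ⊓ ker (s - 1) ∈ r.invtSubmodule := fun r hr =>
      r.invtSubmodule.inf_mem (hVinv r hr)
        (ker_mem_invtSubmodule_of_commute ((hcomm s hs r hr).sub_left (Commute.one_left r)))
    have hsup : V ⊓ ker (s - 1) ⊔ U = ⊤ := by
      refine eq_top_iff.2 (hVU ▸ sup_le ?_ le_sup_right)
      calc V ≤ V ⊓ ker (s - 1) ⊔ range (s - 1) :=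
            le_inf_ker_sub_one_sup_range_sub_one (hss s hs) (hVinv s hs)
        _ ≤ V ⊓ ker (s - 1) ⊔ U :=
            sup_le_sup_left (le_iSup₂ (f := fun s _ => range (s - 1)) s hs) _
    exact hmin _ ⟨hinv, hsup⟩ (inf_lt_left.2 hV)
  exact eq_top_iff.2 (hVU ▸ sup_le_sup_right hVfix U)

end Module.End

lemma LinearMap.range_sub_one_le_ker_of_isometry {R M N : Type*} [CommRing R] [AddCommGroup M]
    [Module R M] [AddCommGroup N] [Module R N] {Φ : M →ₗ[R] M →ₗ[R] N} {s : Module.End R M}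
    (hs : ∀ x y, Φ (s x) (s y) = Φ x y) {x : M} (hx : s x = x) :
    range (s - 1) ≤ ker (Φ x) := by
  rintro _ ⟨y, rfl⟩
  rw [mem_ker, sub_apply, Module.End.one_apply, map_sub, ← hs x y, hx, sub_self]

theorem common_fixed_space_nondegenerate_general
    (F : Type*) [Field F]
    (X : Type*) [AddCommGroup X] [Module F X] [FiniteDimensional F X]
    (Φ : X →ₗ[F] X →ₗ[F] F)
    (hΦnd : ∀ x : X, (∀ y : X, Φ x y = 0) → x = 0)
    (S : Set (X →ₗ[F] X))
    (hcomm : ∀ s ∈ S, ∀ t ∈ S, s ∘ₗ t = t ∘ₗ s)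
    (hiso : ∀ s ∈ S, ∀ x y : X, Φ (s x) (s y) = Φ x y)
    (hss : ∀ s ∈ S, Squarefree (minpoly F s)) :
    ∀ x ∈ {x : X | ∀ s ∈ S, s x = x},
      (∀ y ∈ {x : X | ∀ s ∈ S, s x = x}, Φ x y = 0) → x = 0 := by
  intro x hx hxorth
  refine hΦnd x fun y => ?_
  suffices ⊤ ≤ ker (Φ x) from mem_ker.1 (this Submodule.mem_top)
  rw [← Module.End.iInf_ker_sub_one_sup_iSup_range_sub_one_eq_top hcomm hss]
  exact sup_le (fun y hy => hxorth y (Module.End.mem_iInf_ker_sub_one.1 hy))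
    (iSup₂_le fun s hs => range_sub_one_le_ker_of_isometry (hiso s hs) (hx s hs))

/-- Let `(X, Φ)` be a finite-dimensional nondegenerate bilinear space (symmetric or
antisymmetric) over a field `F` of characteristic not 2, and let `S` be a set of semisimple
isometries of `X` that pairwise commute.  Then the common fixed point space
`X^S = {x | ∀ s ∈ S, s x = x}` is nondegenerate. -/
theorem common_fixed_space_nondegenerate
    (F : Type*) [Field F] (hchar : (2 : F) ≠ 0)
    (X : Type*) [AddCommGroup X] [Module F X] [FiniteDimensional F X]
    (Φ : X →ₗ[F] X →ₗ[F] F)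
    (hΦnd : ∀ x : X, (∀ y : X, Φ x y = 0) → x = 0)
    (hΦsym : (∀ x y : X, Φ x y = Φ y x) ∨ (∀ x y : X, Φ x y = - Φ y x))
    (S : Set (X →ₗ[F] X))
    (hcomm : ∀ s ∈ S, ∀ t ∈ S, s ∘ₗ t = t ∘ₗ s)
    (hbij : ∀ s ∈ S, Function.Bijective s)
    (hiso : ∀ s ∈ S, ∀ x y : X, Φ (s x) (s y) = Φ x y)
    (hss : ∀ s ∈ S, Squarefree (minpoly F s)) :
    ∀ x ∈ {x : X | ∀ s ∈ S, s x = x},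
      (∀ y ∈ {x : X | ∀ s ∈ S, s x = x}, Φ x y = 0) → x = 0 :=
  common_fixed_space_nondegenerate_general F X Φ hΦnd S hcomm hiso hss
end

section
/- With notation as above, let n(ξ₁, η₁) and n(ξ₂, η₂) be elements of the unipotent radical (i.e., pairs satisfying η_i + η_i* + ξ_i ξ_i* = 0) with η₁, η₂ invertible, and suppose m = m(g,h) ∈ G × H acts by (ξ, η) ↦ (gξh^{-1}, gηg*). Then Norm(gξh^{-1}, gηg*) = h · Norm(ξ, η) · h^{-1}. In particular, Norm intertwines the adjoint action of M on N' with conjugation on H. -/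
/-!
Writing `ξ₁ = g ξ h⁻¹` and `η₁ = g η g*`, the adjoint of `ξ₁` is `h ξ* g*` (because `h` is an
isometry), and `η₁⁻¹ g = (g*)⁻¹ η⁻¹`, so in `ξ₁* η₁⁻¹ ξ₁ = h ξ* g* η₁⁻¹ g ξ h⁻¹` the factors `g*`
cancel and what is left is `h (ξ* η⁻¹ ξ) h⁻¹`.
-/

section NormEquivariance

variable {R W W' X : Type*} [CommRing R] [AddCommGroup W] [Module R W]
  [AddCommGroup W'] [Module R W'] [AddCommGroup X] [Module R X]

/-- `Norm(ξ, η) = 1 + ξ* η⁻¹ ξ`, with `ξs` standing for the adjoint `ξ*`. -/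
def normMap (ξ : X →ₗ[R] W) (ξs : W' →ₗ[R] X) (η : W' ≃ₗ[R] W) : Module.End R X :=
  1 + ξs ∘ₗ η.symm.toLinearMap ∘ₗ ξ

theorem adjoint_of_comp_isometry_symm_apply {Bp : W' →ₗ[R] W →ₗ[R] R} {Φ : X →ₗ[R] X →ₗ[R] R}
    (hΦ : Φ.SeparatingLeft) {ξ : X →ₗ[R] W} {ξs : W' →ₗ[R] X}
    (hξs : ∀ w' x, Φ (ξs w') x = Bp w' (ξ x))
    {g : W →ₗ[R] W} {gs : W' →ₗ[R] W'} (hgs : ∀ w' w, Bp (gs w') w = Bp w' (g w))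
    {h : X ≃ₗ[R] X} (hiso : ∀ x y, Φ (h x) (h y) = Φ x y)
    {ξ₁s : W' →ₗ[R] X} (hξ₁s : ∀ w' x, Φ (ξ₁s w') x = Bp w' (g (ξ (h.symm x)))) (w' : W') :
    ξ₁s w' = h (ξs (gs w')) := by
  refine LinearMap.ker_eq_bot.mp (LinearMap.separatingLeft_iff_ker_eq_bot.mp hΦ)
    (LinearMap.ext fun z => ?_)
  calc Φ (ξ₁s w') z = Bp (gs w') (ξ (h.symm z)) := by rw [hξ₁s, hgs]
    _ = Φ (h (ξs (gs w'))) (h (h.symm z)) := by rw [hiso, hξs]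
    _ = Φ (h (ξs (gs w'))) z := by rw [h.apply_symm_apply]

theorem apply_symm_apply_of_eq_conj {g : W ≃ₗ[R] W} {gs : W' →ₗ[R] W'} {η η₁ : W' ≃ₗ[R] W}
    (hη₁ : ∀ w', η₁ w' = g (η (gs w'))) (w : W) :
    gs (η₁.symm (g w)) = η.symm w := by
  rw [LinearEquiv.eq_symm_apply, ← g.injective.eq_iff, ← hη₁, η₁.apply_symm_apply]

theorem normMap_conj {Bp : W' →ₗ[R] W →ₗ[R] R} {Φ : X →ₗ[R] X →ₗ[R] R}
    (hΦ : Φ.SeparatingLeft) {ξ : X →ₗ[R] W} {ξs : W' →ₗ[R] X}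
    (hξs : ∀ w' x, Φ (ξs w') x = Bp w' (ξ x)) {η : W' ≃ₗ[R] W}
    {g : W ≃ₗ[R] W} {gs : W' →ₗ[R] W'} (hgs : ∀ w' w, Bp (gs w') w = Bp w' (g w))
    {h : X ≃ₗ[R] X} (hiso : ∀ x y, Φ (h x) (h y) = Φ x y)
    {ξ₁s : W' →ₗ[R] X} (hξ₁s : ∀ w' x, Φ (ξ₁s w') x = Bp w' (g (ξ (h.symm x))))
    {η₁ : W' ≃ₗ[R] W} (hη₁ : ∀ w', η₁ w' = g (η (gs w'))) :
    normMap (g.toLinearMap ∘ₗ ξ ∘ₗ h.symm.toLinearMap) ξ₁s η₁ = h.conj (normMap ξ ξs η) := by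
  ext x
  have hadj := adjoint_of_comp_isometry_symm_apply hΦ hξs (g := g.toLinearMap) hgs hiso hξ₁s
  simp [normMap, LinearEquiv.conj_apply, hadj, apply_symm_apply_of_eq_conj hη₁]

end NormEquivariance

theorem norm_equivariance_general
    (F : Type*) [Field F]
    (W W' X : Type*)
    [AddCommGroup W] [Module F W]
    [AddCommGroup W'] [Module F W']
    [AddCommGroup X] [Module F X]
    (Bp : W' →ₗ[F] W →ₗ[F] F)
    (Φ : X →ₗ[F] X →ₗ[F] F)
    (hΦnd : ∀ x : X, (∀ y : X, Φ x y = 0) → x = 0)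
    (ξ : X →ₗ[F] W) (ξs : W' →ₗ[F] X)
    (hξs : ∀ (w' : W') (x : X), Φ (ξs w') x = Bp w' (ξ x))
    (η : W' ≃ₗ[F] W)
    -- the element m(g, h) of the Levi M ≅ G × H :
    (g : W ≃ₗ[F] W) (gs : W' →ₗ[F] W')
    (hgs : ∀ (w' : W') (w : W), Bp (gs w') w = Bp w' (g w))
    (h : X ≃ₗ[F] X) (hiso : ∀ x y : X, Φ (h x) (h y) = Φ x y)
    -- the transported pair (ξ₁, η₁) = (g ξ h⁻¹, g η g*) together with the adjoint of ξ₁ :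
    (ξ1s : W' →ₗ[F] X)
    (hξ1s : ∀ (w' : W') (x : X), Φ (ξ1s w') x = Bp w' (g (ξ (h.symm x))))
    (η1 : W' ≃ₗ[F] W)
    (hη1 : ∀ w' : W', η1 w' = g (η (gs w'))) :
    ∀ x : X, x + ξ1s (η1.symm (g (ξ (h.symm x)))) =
      h (h.symm x + ξs (η.symm (ξ (h.symm x)))) := by
  intro x
  simpa [normMap, LinearEquiv.conj_apply] using
    LinearMap.congr_fun (normMap_conj hΦnd hξs hgs hiso hξ1s hη1) x

/-- Norm equivariance: with `m(g,h) ∈ M ≅ GL(W) × H` acting on pairs by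
`(ξ, η) ↦ (g ξ h⁻¹, g η g*)` (where `g* : W' → W'` is the adjoint of `g` via the pairing
`Bp` between `W'` and `W`, and `h` is an isometry of `(X, Φ)`), we have
`Norm(g ξ h⁻¹, g η g*) = h ∘ Norm(ξ, η) ∘ h⁻¹`, where `Norm(ξ₀,η₀) = 1 + ξ₀* η₀⁻¹ ξ₀`.
Here `ξ1s` is the adjoint of `ξ₁ = g ξ h⁻¹` and `η₁` is the (invertible) map `g η g*`. -/
theorem norm_equivariance
    (F : Type*) [Field F] (hchar : (2 : F) ≠ 0)
    (W W' X : Type*)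
    [AddCommGroup W] [Module F W] [FiniteDimensional F W]
    [AddCommGroup W'] [Module F W'] [FiniteDimensional F W']
    [AddCommGroup X] [Module F X] [FiniteDimensional F X]
    (ε : F) (hε : ε = 1 ∨ ε = -1)
    (Bp : W' →ₗ[F] W →ₗ[F] F)
    (hBp1 : ∀ w' : W', (∀ w : W, Bp w' w = 0) → w' = 0)
    (hBp2 : ∀ w : W, (∀ w' : W', Bp w' w = 0) → w = 0)
    (Φ : X →ₗ[F] X →ₗ[F] F)
    (hΦnd : ∀ x : X, (∀ y : X, Φ x y = 0) → x = 0)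
    (hΦε : ∀ x y : X, Φ x y = ε * Φ y x)
    (ξ : X →ₗ[F] W) (ξs : W' →ₗ[F] X)
    (hξs : ∀ (w' : W') (x : X), Φ (ξs w') x = Bp w' (ξ x))
    (η : W' ≃ₗ[F] W) (ηs : W' →ₗ[F] W)
    (hηs : ∀ w₁' w₂' : W', ε * Bp w₂' (ηs w₁') = Bp w₁' (η w₂'))
    (hrel : ∀ w' : W', η w' + ηs w' + ξ (ξs w') = 0)
    -- the element m(g, h) of the Levi M ≅ G × H :
    (g : W ≃ₗ[F] W) (gs : W' →ₗ[F] W')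
    (hgs : ∀ (w' : W') (w : W), Bp (gs w') w = Bp w' (g w))
    (h : X ≃ₗ[F] X) (hiso : ∀ x y : X, Φ (h x) (h y) = Φ x y)
    -- the transported pair (ξ₁, η₁) = (g ξ h⁻¹, g η g*) together with the adjoint of ξ₁ :
    (ξ1s : W' →ₗ[F] X)
    (hξ1s : ∀ (w' : W') (x : X), Φ (ξ1s w') x = Bp w' (g (ξ (h.symm x))))
    (η1 : W' ≃ₗ[F] W)
    (hη1 : ∀ w' : W', η1 w' = g (η (gs w'))) :
    ∀ x : X, x + ξ1s (η1.symm (g (ξ (h.symm x)))) =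
      h (h.symm x + ξs (η.symm (ξ (h.symm x)))) :=
  norm_equivariance_general F W W' X Bp Φ hΦnd ξ ξs hξs η g gs hgs h hiso ξ1s hξ1s η1 hη1
end

section
/- (Shahidi's Lemma) Let V, W, W', X be as above and ξ : X → W a linear map. If g ∈ GL(X) satisfies ξξ* = (ξg)(ξg)*, then there exists an isometry h ∈ H = Isom(X, Φ|_X) such that ξg = ξh. -/
/-!
The adjoint `g'` of `g` with respect to `Φ` sends `ξ* w'` to `(ξ g)* w'`, so the hypothesis
`ξ ξ* = (ξ g)(ξ g)*` says that `g'` is isometric on the image of `ξ*`; it is also injective there.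
By Witt's extension theorem `g'` agrees on that image with an isometry `τ` of `X`, and `h = τ⁻¹`
works because `ξ h` and `ξ g` then have the same adjoint.

Witt's theorem for a nondegenerate subspace `U` goes by induction on `U`: split off a nondegenerate
block `P ≤ U` (an anisotropic line if `Φ` is symmetric, a hyperbolic plane if it is alternating),
extend on `Pᗮ ⊓ U`, and correct on `P` by an isometry fixing `Pᗮ ⊓ U`; such isometries are built
from reflections, respectively transvections. A degenerate `U` is enlarged by a hyperbolic partner
of a radical vector until it becomes nondegenerate.
-/

open LinearMap (BilinForm)
open Module Submodule

namespace LinearMap.BilinForm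

variable {F X : Type*} [Field F] [AddCommGroup X] [Module F X] {Φ : BilinForm F X}

lemma _root_.LinearMap.IsOrthogonal.mul {σ τ : X ≃ₗ[F] X} (hσ : Φ.IsOrthogonal σ)
    (hτ : Φ.IsOrthogonal τ) : Φ.IsOrthogonal ⇑(σ * τ) := fun x y => by
  rw [LinearEquiv.mul_apply, LinearEquiv.mul_apply, hσ, hτ]

lemma _root_.LinearMap.IsOrthogonal.symm {σ : X ≃ₗ[F] X} (hσ : Φ.IsOrthogonal σ) :
    Φ.IsOrthogonal σ.symm := fun x y => by
  rw [← hσ, σ.apply_symm_apply, σ.apply_symm_apply]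

variable (Φ) in
def isometryFixingSubgroup (S : Set X) : Subgroup (X ≃ₗ[F] X) where
  carrier := {ρ | Φ.IsOrthogonal ρ ∧ ∀ x ∈ S, ρ x = x}
  mul_mem' := fun ⟨hρ, hρS⟩ ⟨hσ, hσS⟩ =>
    ⟨hρ.mul hσ, fun x hx => by rw [LinearEquiv.mul_apply, hσS x hx, hρS x hx]⟩
  one_mem' := ⟨fun _ _ => rfl, fun _ _ => rfl⟩
  inv_mem' := fun ⟨hρ, hρS⟩ =>
    ⟨hρ.symm, fun x hx => (LinearEquiv.symm_apply_eq _).mpr (hρS x hx).symm⟩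

lemma apply_mem_of_mem_isometryFixingSubgroup [FiniteDimensional F X] (hnd : Φ.Nondegenerate)
    (hrefl : Φ.IsRefl) {Y : Submodule F X} {ρ : X ≃ₗ[F] X}
    (hρ : ρ ∈ Φ.isometryFixingSubgroup (Φ.orthogonal Y)) {y : X} (hy : y ∈ Y) : ρ y ∈ Y := by
  rw [← orthogonal_orthogonal hnd hrefl Y]
  intro n hn
  rw [← hρ.2 n hn, hρ.1, hrefl _ _ (hn y hy)]

lemma exists_reflection_mem_isometryFixingSubgroup (hΦ : Φ.IsSymm) {Y : Submodule F X} {z : X}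
    (hz : z ∈ Y) (hzz : Φ z z ≠ 0) :
    ∃ ρ ∈ Φ.isometryFixingSubgroup (Φ.orthogonal Y), ∀ x, ρ x = x - (2 * Φ z x / Φ z z) • z := by
  have h : ((2 / Φ z z) • Φ z) z = 2 := by simp [hzz]
  refine ⟨Module.reflection h, ⟨fun x y => ?_, fun x hx => ?_⟩, fun x => ?_⟩
  · simp only [Module.reflection_apply, LinearMap.smul_apply, smul_eq_mul, map_sub, map_smul,
      LinearMap.sub_apply, LinearMap.smul_apply, hΦ.eq x z]
    field_simp
    ring
  · simp [Module.reflection_apply, hx z hz]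
  · rw [Module.reflection_apply, LinearMap.smul_apply, smul_eq_mul, div_mul_eq_mul_div]

lemma exists_transvection_mem_isometryFixingSubgroup (hΦ : Φ.IsAlt) {Y : Submodule F X} {a : X}
    (ha : a ∈ Y) (c : F) :
    ∃ ρ ∈ Φ.isometryFixingSubgroup (Φ.orthogonal Y), ∀ x, ρ x = x + (c * Φ a x) • a := by
  have h : (c • Φ a) a = 0 := by simp [hΦ.self_eq_zero a]
  refine ⟨LinearEquiv.transvection h, ⟨fun x y => ?_, fun x hx => ?_⟩, fun x => rfl⟩
  · simp only [LinearEquiv.transvection.apply, LinearMap.smul_apply, smul_eq_mul, map_add,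
      map_smul, LinearMap.add_apply, LinearMap.smul_apply, hΦ.self_eq_zero a, ← hΦ.neg_eq a x]
    ring
  · rw [LinearEquiv.transvection.apply]
    simp [hx a ha]

lemma exists_mem_isometryFixingSubgroup_apply_eq_of_isSymm (h2 : (2 : F) ≠ 0) (hΦ : Φ.IsSymm)
    {Y : Submodule F X} {u u' : X} (hu : u ∈ Y) (hu' : u' ∈ Y) (huu : Φ u u ≠ 0)
    (hu'u' : Φ u' u' = Φ u u) :
    ∃ ρ ∈ Φ.isometryFixingSubgroup (Φ.orthogonal Y), ρ u = u' := by
  by_cases hd : Φ (u - u') (u - u') = 0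
  · have he : Φ (u + u') (u + u') = 2 * Φ (u + u') u := by
      simp only [map_add, LinearMap.add_apply, hu'u', hΦ.eq u' u]; ring
    have he0 : Φ (u + u') (u + u') ≠ 0 := by
      intro he0
      have hsum : Φ (u - u') (u - u') + Φ (u + u') (u + u') = 2 * 2 * Φ u u := by
        simp only [map_add, map_sub, LinearMap.add_apply, LinearMap.sub_apply, hu'u']; ring
      rw [hd, he0, zero_add] at hsum
      simp [h2, huu] at hsum
    obtain ⟨ρ₁, hρ₁, hρ₁u⟩ := exists_reflection_mem_isometryFixingSubgroup hΦ (Y.add_mem hu hu') he0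
    obtain ⟨ρ₂, hρ₂, hρ₂u'⟩ := exists_reflection_mem_isometryFixingSubgroup hΦ hu' (hu'u' ▸ huu)
    -- the reflection in `u + u'` sends `u` to `-u'`, the one in `u'` fixes the sign
    refine ⟨ρ₂ * ρ₁, mul_mem hρ₂ hρ₁, ?_⟩
    rw [LinearEquiv.mul_apply, hρ₁u, ← he, div_self he0, one_smul, sub_add_cancel_left, map_neg,
      hρ₂u', mul_div_assoc, div_self (hu'u' ▸ huu)]
    module
  · have hd' : Φ (u - u') (u - u') = 2 * Φ (u - u') u := by
      simp only [map_sub, LinearMap.sub_apply, hu'u', hΦ.eq u' u]; ring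
    obtain ⟨ρ, hρ, hρu⟩ := exists_reflection_mem_isometryFixingSubgroup hΦ (Y.sub_mem hu hu') hd
    exact ⟨ρ, hρ, by rw [hρu, ← hd', div_self hd, one_smul, sub_sub_cancel]⟩

lemma exists_transvection_apply_eq (hΦ : Φ.IsAlt) {Y : Submodule F X} {a b : X} (ha : a ∈ Y)
    (hb : b ∈ Y) (hba : Φ b a ≠ 0) :
    ∃ ρ ∈ Φ.isometryFixingSubgroup (Φ.orthogonal Y), ρ a = b ∧ ∀ x, Φ a x = Φ b x → ρ x = x := by
  obtain ⟨ρ, hρ, hρx⟩ :=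
    exists_transvection_mem_isometryFixingSubgroup hΦ (Y.sub_mem hb ha) (Φ b a)⁻¹
  refine ⟨ρ, hρ, ?_, fun x hx => ?_⟩
  · rw [hρx, map_sub, LinearMap.sub_apply, hΦ.self_eq_zero a, sub_zero, inv_mul_cancel₀ hba,
      one_smul, add_sub_cancel]
  · rw [hρx, map_sub, LinearMap.sub_apply, hx, sub_self, mul_zero, zero_smul, add_zero]

lemma exists_mem_apply_ne_zero_and_apply_ne_zero {R M : Type*} [Ring R] [AddCommGroup M]
    [Module R M] {S : Submodule R M} {f g : M →ₗ[R] R} (hf : ∃ z ∈ S, f z ≠ 0)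
    (hg : ∃ z ∈ S, g z ≠ 0) : ∃ z ∈ S, f z ≠ 0 ∧ g z ≠ 0 := by
  obtain ⟨z₁, hz₁, hfz₁⟩ := hf
  obtain ⟨z₂, hz₂, hgz₂⟩ := hg
  by_cases hgz₁ : g z₁ = 0
  · by_cases hfz₂ : f z₂ = 0
    · exact ⟨z₁ + z₂, S.add_mem hz₁ hz₂, by simp [hfz₂, hfz₁], by simp [hgz₁, hgz₂]⟩
    · exact ⟨z₂, hz₂, hfz₂, hgz₂⟩
  · exact ⟨z₁, hz₁, hfz₁, hgz₁⟩

lemma exists_mem_isometryFixingSubgroup_apply_eq_of_isAlt (hΦ : Φ.IsAlt) {Y : Submodule F X}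
    (hY : Disjoint Y (Φ.orthogonal Y)) {a b : X} (ha : a ∈ Y) (hb : b ∈ Y) (ha0 : a ≠ 0)
    (hb0 : b ≠ 0) : ∃ ρ ∈ Φ.isometryFixingSubgroup (Φ.orthogonal Y), ρ a = b := by
  by_cases hba : Φ b a = 0
  · have hnot (x : X) (hx : x ∈ Y) (hx0 : x ≠ 0) : ∃ z ∈ Y, Φ z x ≠ 0 := by
      by_contra! h
      exact hx0 (disjoint_def.mp hY x hx h)
    obtain ⟨z, hz, hza, hbz⟩ := exists_mem_apply_ne_zero_and_apply_ne_zero (f := Φ.flip a)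
      (g := Φ b) (hnot a ha ha0) (by simpa [← hΦ.neg_eq b] using hnot b hb hb0)
    obtain ⟨ρ₁, hρ₁, hρ₁a, -⟩ := exists_transvection_apply_eq hΦ ha hz hza
    obtain ⟨ρ₂, hρ₂, hρ₂z, -⟩ := exists_transvection_apply_eq hΦ hz hb hbz
    exact ⟨ρ₂ * ρ₁, mul_mem hρ₂ hρ₁, by rw [LinearEquiv.mul_apply, hρ₁a, hρ₂z]⟩
  · obtain ⟨ρ, hρ, hρa, -⟩ := exists_transvection_apply_eq hΦ ha hb hba
    exact ⟨ρ, hρ, hρa⟩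

lemma exists_mem_isometryFixingSubgroup_fixing_apply_eq_of_isAlt (hΦ : Φ.IsAlt)
    {Y : Submodule F X} {u v v' : X} (hu : u ∈ Y) (hv : v ∈ Y) (hv' : v' ∈ Y) (huv : Φ u v = 1)
    (huv' : Φ u v' = 1) :
    ∃ ρ ∈ Φ.isometryFixingSubgroup (Φ.orthogonal Y), ρ u = u ∧ ρ v = v' := by
  have hvu : Φ v u = -1 := by rw [← hΦ.neg_eq, huv]
  have hv'u : Φ v' u = -1 := by rw [← hΦ.neg_eq, huv']
  by_cases hv'v : Φ v' v = 0
  · have h₁ : Φ (u + v) v ≠ 0 := by simp [huv, hΦ.self_eq_zero v]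
    have h₂ : Φ v' (u + v) ≠ 0 := by simp [hv'u, hv'v]
    obtain ⟨ρ₁, hρ₁, hρ₁v, hρ₁u⟩ := exists_transvection_apply_eq hΦ hv (Y.add_mem hu hv) h₁
    obtain ⟨ρ₂, hρ₂, hρ₂v, hρ₂u⟩ := exists_transvection_apply_eq hΦ (Y.add_mem hu hv) hv' h₂
    refine ⟨ρ₂ * ρ₁, mul_mem hρ₂ hρ₁, ?_, by rw [LinearEquiv.mul_apply, hρ₁v, hρ₂v]⟩
    rw [LinearEquiv.mul_apply, hρ₁u u (by simp [hΦ.self_eq_zero u]),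
      hρ₂u u (by simp [hΦ.self_eq_zero u, hvu, hv'u])]
  · obtain ⟨ρ, hρ, hρv, hρu⟩ := exists_transvection_apply_eq hΦ hv hv' hv'v
    exact ⟨ρ, hρ, hρu u (hvu.trans hv'u.symm), hρv⟩

lemma exists_mem_isometryFixingSubgroup_apply_eq_pair_of_isAlt [FiniteDimensional F X]
    (hΦ : Φ.IsAlt) (hnd : Φ.Nondegenerate) {Y : Submodule F X} (hY : Disjoint Y (Φ.orthogonal Y))
    {u v u' v' : X} (hu : u ∈ Y) (hv : v ∈ Y) (hu' : u' ∈ Y) (hv' : v' ∈ Y) (huv : Φ u v = 1)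
    (huv' : Φ u' v' = 1) :
    ∃ ρ ∈ Φ.isometryFixingSubgroup (Φ.orthogonal Y), ρ u = u' ∧ ρ v = v' := by
  have hne {a b : X} (h : Φ a b = 1) : a ≠ 0 := by rintro rfl; simp at h
  obtain ⟨ρ₁, hρ₁, hρ₁u⟩ :=
    exists_mem_isometryFixingSubgroup_apply_eq_of_isAlt hΦ hY hu hu' (hne huv) (hne huv')
  have hρ₁v : Φ u' (ρ₁ v) = 1 := by rw [← hρ₁u, hρ₁.1, huv]
  obtain ⟨ρ₂, hρ₂, hρ₂u', hρ₂v⟩ := exists_mem_isometryFixingSubgroup_fixing_apply_eq_of_isAlt hΦ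
    hu' (apply_mem_of_mem_isometryFixingSubgroup hnd hΦ.isRefl hρ₁ hv) hv' hρ₁v huv'
  exact ⟨ρ₂ * ρ₁, mul_mem hρ₂ hρ₁, by simp [hρ₁u, hρ₂u'], by simp [hρ₂v]⟩

variable (Φ) in
/-- Every isometric embedding of `P` into a nondegenerate subspace `Y ⊇ P` is induced by an
isometry fixing `Yᗮ` pointwise. -/
def IsWittBlock (P : Submodule F X) : Prop :=
  ∀ Y : Submodule F X, Disjoint Y (Φ.orthogonal Y) → P ≤ Y → ∀ σ : X →ₗ[F] X,
    (∀ p ∈ P, σ p ∈ Y) → (∀ p ∈ P, ∀ q ∈ P, Φ (σ p) (σ q) = Φ p q) →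
      ∃ ρ ∈ Φ.isometryFixingSubgroup (Φ.orthogonal Y), Set.EqOn ρ σ P

lemma isWittBlock_span_singleton (h2 : (2 : F) ≠ 0) (hΦ : Φ.IsSymm) {u : X} (hu : Φ u u ≠ 0) :
    Φ.IsWittBlock (F ∙ u) := by
  intro Y _ hPY σ hσY hσ
  have hu₁ := mem_span_singleton_self (R := F) u
  obtain ⟨ρ, hρ, hρu⟩ := exists_mem_isometryFixingSubgroup_apply_eq_of_isSymm h2 hΦ (hPY hu₁)
    (hσY u hu₁) hu (hσ u hu₁ u hu₁)
  exact ⟨ρ, hρ, eqOn_span' (by simpa using hρu)⟩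

lemma isWittBlock_span_pair [FiniteDimensional F X] (hΦ : Φ.IsAlt) (hnd : Φ.Nondegenerate)
    {u v : X} (huv : Φ u v = 1) : Φ.IsWittBlock (span F {u, v}) := by
  intro Y hY hPY σ hσY hσ
  have hu : u ∈ span F {u, v} := subset_span (by simp)
  have hv : v ∈ span F {u, v} := subset_span (by simp)
  obtain ⟨ρ, hρ, hρu, hρv⟩ := exists_mem_isometryFixingSubgroup_apply_eq_pair_of_isAlt hΦ hnd hY
    (hPY hu) (hPY hv) (hσY u hu) (hσY v hv) huv ((hσ u hu v hv).trans huv)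
  refine ⟨ρ, hρ, eqOn_span' ?_⟩
  rintro x (rfl | rfl) <;> simp [hρu, hρv]

lemma disjoint_span_pair_orthogonal (hΦ : Φ.IsAlt) {u v : X} (huv : Φ u v = 1) :
    Disjoint (span F {u, v}) (Φ.orthogonal (span F {u, v})) := by
  have hvu : Φ v u = -1 := by rw [← hΦ.neg_eq, huv]
  refine disjoint_def.mpr fun x hx hxP => ?_
  obtain ⟨a, b, rfl⟩ := mem_span_pair.mp hx
  have hb := hxP u (subset_span (by simp))
  have ha := hxP v (subset_span (by simp))
  simp only [map_add, map_smul, smul_eq_mul, hΦ.self_eq_zero, huv, hvu] at ha hb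
  simp_all

lemma exists_isWittBlock_le [FiniteDimensional F X] (h2 : (2 : F) ≠ 0) (hΦ : Φ.IsSymm ∨ Φ.IsAlt)
    (hnd : Φ.Nondegenerate) {U : Submodule F X} (hU : Disjoint U (Φ.orthogonal U)) (hU0 : U ≠ ⊥) :
    ∃ P ≤ U, P ≠ ⊥ ∧ Disjoint P (Φ.orthogonal P) ∧ Φ.IsWittBlock P := by
  obtain ⟨u, huU, hu0⟩ := U.ne_bot_iff.mp hU0
  obtain ⟨p, hpU, hpu⟩ : ∃ p ∈ U, Φ p u ≠ 0 := by
    by_contra! h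
    exact hu0 (disjoint_def.mp hU u huU h)
  rcases hΦ with hΦ | hΦ
  · obtain ⟨z, hzU, hz⟩ : ∃ z ∈ U, Φ z z ≠ 0 := by
      have := invertibleOfNonzero h2
      have hres : Φ.restrict U ≠ 0 := fun h => hpu (by simpa using congr($h ⟨p, hpU⟩ ⟨u, huU⟩))
      obtain ⟨z, hz⟩ := exists_bilinForm_self_ne_zero hres (isSymm_iff.mp (hΦ.restrict U))
      exact ⟨z, z.2, hz⟩
    refine ⟨F ∙ z, (span_singleton_le_iff_mem z U).mpr hzU, ?_, ?_,
      isWittBlock_span_singleton h2 hΦ hz⟩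
    · simpa using ne_zero_of_not_isOrtho_self z hz
    · exact disjoint_iff.mpr (span_singleton_inf_orthogonal_eq_bot hz)
  · have hup : Φ u p ≠ 0 := by rwa [← hΦ.neg_eq, neg_ne_zero]
    set v := (Φ u p)⁻¹ • p
    have huv : Φ u v = 1 := by simp [v, hup]
    refine ⟨span F {u, v}, span_le.mpr
      (Set.insert_subset_iff.mpr ⟨huU, Set.singleton_subset_iff.mpr (U.smul_mem _ hpU)⟩),
      (span F {u, v}).ne_bot_iff.mpr ⟨u, subset_span (by simp), hu0⟩,
      disjoint_span_pair_orthogonal hΦ huv, isWittBlock_span_pair hΦ hnd huv⟩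

lemma disjoint_orthogonal_of_sup_eq {U P H : Submodule F X} (hU : Disjoint U (Φ.orthogonal U))
    (hHP : H ≤ Φ.orthogonal P) (hsup : P ⊔ H = U) : Disjoint H (Φ.orthogonal H) := by
  refine disjoint_def.mpr fun x hxH hxH' => disjoint_def.mp hU x (hsup ▸ mem_sup_right hxH) ?_
  rw [← hsup]
  intro n hn
  obtain ⟨p, hp, h, hh, rfl⟩ := mem_sup.mp hn
  simp [hHP hxH p hp, hxH' h hh]

theorem exists_isOrthogonal_eqOn_of_disjoint [FiniteDimensional F X] (h2 : (2 : F) ≠ 0)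
    (hΦ : Φ.IsSymm ∨ Φ.IsAlt) (hnd : Φ.Nondegenerate) (U : Submodule F X)
    (hU : Disjoint U (Φ.orthogonal U)) (σ : X →ₗ[F] X)
    (hσ : ∀ u ∈ U, ∀ v ∈ U, Φ (σ u) (σ v) = Φ u v) :
    ∃ τ : X ≃ₗ[F] X, Φ.IsOrthogonal τ ∧ Set.EqOn τ σ U := by
  have hrefl : Φ.IsRefl := hΦ.elim IsSymm.isRefl IsAlt.isRefl
  induction U using WellFoundedLT.induction generalizing σ with | ind U IH =>
  rcases eq_or_ne U ⊥ with rfl | hU0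
  · exact ⟨1, fun _ _ => rfl, fun x hx => by simp [(mem_bot F).mp hx]⟩
  obtain ⟨P, hPU, hP0, hP, hPblock⟩ := exists_isWittBlock_le h2 hΦ hnd hU hU0
  set H := Φ.orthogonal P ⊓ U
  have hsup : P ⊔ H = U := by
    rw [← sup_inf_assoc_of_le _ hPU, ((isCompl_orthogonal_iff_disjoint hrefl).mpr hP).sup_eq_top,
      top_inf_eq]
  have hHU : H < U := by
    refine inf_le_right.lt_of_ne fun hHU => hP0 (disjoint_self.mp ?_)
    exact hP.mono_right (hPU.trans (hHU.symm.le.trans inf_le_left))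
  have hH := disjoint_orthogonal_of_sup_eq hU inf_le_left hsup
  obtain ⟨τ₀, hτ₀, hτ₀H⟩ := IH H hHU hH σ fun u hu v hv => hσ u hu.2 v hv.2
  -- `τ₀⁻¹ σ` fixes `H`, hence maps `P` into `Hᗮ`, where the block property corrects it.
  set σ' := τ₀.symm.toLinearMap ∘ₗ σ
  have hσ' (u) (hu : u ∈ U) (v) (hv : v ∈ U) : Φ (σ' u) (σ' v) = Φ u v := by
    simp only [σ', LinearMap.comp_apply, LinearEquiv.coe_coe]
    rw [hτ₀.symm, hσ u hu v hv]
  have hσ'H (h) (hh : h ∈ H) : σ' h = h := by simp [σ', ← hτ₀H hh]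
  have hY : Disjoint (Φ.orthogonal H) (Φ.orthogonal (Φ.orthogonal H)) := by
    rw [orthogonal_orthogonal hnd hrefl]; exact hH.symm
  have hPY : P ≤ Φ.orthogonal H := fun p hp h hh => hrefl _ _ (hh.1 p hp)
  have hσ'Y (p) (hp : p ∈ P) : σ' p ∈ Φ.orthogonal H := fun h hh => by
    rw [← hσ'H h hh, hσ' h hh.2 p (hPU hp), hPY hp h hh]
  obtain ⟨ρ, hρ, hρP⟩ := hPblock _ hY hPY σ' hσ'Y fun p hp q hq => hσ' p (hPU hp) q (hPU hq)
  refine ⟨τ₀ * ρ, hτ₀.mul hρ.1, hsup ▸ eqOn_sup (f := ((τ₀ * ρ : X ≃ₗ[F] X) : X →ₗ[F] X)) ?_ ?_⟩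
  · intro p hp
    simp [hρP hp, σ']
  · intro h hh
    simp [hρ.2 h (le_orthogonal_orthogonal hrefl hh), hτ₀H hh]

lemma isSymm_or_isAlt_of_forall_eq_mul (h2 : (2 : F) ≠ 0) {ε : F} (hε : ε = 1 ∨ ε = -1)
    (hΦε : ∀ x y, Φ x y = ε * Φ y x) : Φ.IsSymm ∨ Φ.IsAlt := by
  rcases hε with rfl | rfl
  · exact Or.inl ⟨fun x y => by simpa using hΦε x y⟩
  · refine Or.inr fun x => ?_
    have h := hΦε x x
    rw [neg_one_mul, eq_neg_iff_add_eq_zero, ← two_mul] at h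
    exact (mul_eq_zero.mp h).resolve_left h2

lemma apply_swap_eq_of_apply_eq (hΦ : Φ.IsSymm ∨ Φ.IsAlt) {x y x' y' : X}
    (h : Φ x y = Φ x' y') : Φ y x = Φ y' x' := by
  rcases hΦ with hΦ | hΦ
  · rw [← hΦ.eq x y, h, hΦ.eq]
  · rw [← hΦ.neg_eq x y, h, hΦ.neg_eq]

lemma exists_isotropic_partner (h2 : (2 : F) ≠ 0) (hΦ : Φ.IsSymm ∨ Φ.IsAlt) {u w : X}
    (hu : Φ u u = 0) (huw : Φ u w = 1) :
    ∃ v, Φ v v = 0 ∧ Φ u v = 1 ∧ ∀ x, Φ x u = 0 → Φ x v = Φ x w := by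
  refine ⟨w - (Φ w w / 2) • u, ?_, by simp [hu, huw], fun x hx => by simp [hx]⟩
  rcases hΦ with hΦ | hΦ
  · simp only [map_sub, map_smul, LinearMap.sub_apply, LinearMap.smul_apply, smul_eq_mul, hu,
      ← hΦ.eq u w, huw]
    field_simp
    ring
  · simp [hΦ.self_eq_zero]

lemma exists_apply_eq_of_disjoint_ker [FiniteDimensional F X] (hnd : Φ.Nondegenerate)
    {U : Submodule F X} {σ : X →ₗ[F] X} (hinj : Disjoint U (LinearMap.ker σ)) (f : Dual F X) :
    ∃ w, ∀ p ∈ U, Φ (σ p) w = f p := by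
  obtain ⟨π, hπ⟩ := (σ ∘ₗ U.subtype).exists_leftInverse_of_injective <|
    LinearMap.ker_eq_bot'.mpr fun p hp => Subtype.ext (disjoint_def.mp hinj p p.2 hp)
  refine ⟨(Φ.flip.toDual hnd.flip).symm (f ∘ₗ U.subtype ∘ₗ π), fun p hp => ?_⟩
  change Φ.flip _ (σ p) = _
  rw [apply_toDual_symm_apply]
  simpa using congr(f (U.subtype ($hπ ⟨p, hp⟩)))

lemma apply_apply_eq_of_mem_sup_span_singleton (hΦ : Φ.IsSymm ∨ Φ.IsAlt) {U : Submodule F X}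
    {σ : X →ₗ[F] X} {v : X} (hσ : ∀ p ∈ U, ∀ q ∈ U, Φ (σ p) (σ q) = Φ p q)
    (hv : ∀ p ∈ U, Φ (σ p) (σ v) = Φ p v) (hvv : Φ (σ v) (σ v) = Φ v v) :
    ∀ x ∈ U ⊔ F ∙ v, ∀ y ∈ U ⊔ F ∙ v, Φ (σ x) (σ y) = Φ x y := by
  rintro x hx y hy
  obtain ⟨p, hp, _, ha, rfl⟩ := mem_sup.mp hx
  obtain ⟨a, rfl⟩ := mem_span_singleton.mp ha
  obtain ⟨q, hq, _, hb, rfl⟩ := mem_sup.mp hy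
  obtain ⟨b, rfl⟩ := mem_span_singleton.mp hb
  simp [hσ p hp q hq, hv p hp, apply_swap_eq_of_apply_eq hΦ (hv q hq), hvv]

lemma disjoint_sup_span_singleton_ker {U : Submodule F X} {σ : X →ₗ[F] X} {u v : X}
    (hσ : ∀ x ∈ U ⊔ F ∙ v, ∀ y ∈ U ⊔ F ∙ v, Φ (σ x) (σ y) = Φ x y)
    (hinj : Disjoint U (LinearMap.ker σ)) (hu : u ∈ U) (huU : ∀ p ∈ U, Φ u p = 0)
    (huv : Φ u v ≠ 0) : Disjoint (U ⊔ F ∙ v) (LinearMap.ker σ) := by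
  refine disjoint_def.mpr fun x hx hσx => ?_
  obtain ⟨p, hp, _, ha, rfl⟩ := mem_sup.mp hx
  obtain ⟨a, rfl⟩ := mem_span_singleton.mp ha
  have ha0 : a = 0 := by
    have := hσ u (mem_sup_left hu) _ hx
    simp_all
  subst ha0
  simpa using disjoint_def.mp hinj p hp (by simpa using hσx)

lemma exists_extend_sup_span_singleton [FiniteDimensional F X] (h2 : (2 : F) ≠ 0)
    (hΦ : Φ.IsSymm ∨ Φ.IsAlt) (hnd : Φ.Nondegenerate) {U : Submodule F X} {σ : X →ₗ[F] X}
    (hinj : Disjoint U (LinearMap.ker σ)) (hσ : ∀ p ∈ U, ∀ q ∈ U, Φ (σ p) (σ q) = Φ p q) {u : X}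
    (hu : u ∈ U ⊓ Φ.orthogonal U) (hu0 : u ≠ 0) :
    ∃ v ∉ U, ∃ σ' : X →ₗ[F] X, Set.EqOn σ' σ U ∧ Disjoint (U ⊔ F ∙ v) (LinearMap.ker σ') ∧
      ∀ x ∈ U ⊔ F ∙ v, ∀ y ∈ U ⊔ F ∙ v, Φ (σ' x) (σ' y) = Φ x y := by
  have hrefl : Φ.IsRefl := hΦ.elim IsSymm.isRefl IsAlt.isRefl
  have huU (p) (hp : p ∈ U) : Φ u p = 0 := hrefl _ _ (hu.2 p hp)
  obtain ⟨v₀, hv₀⟩ : ∃ v₀, Φ u v₀ = 1 := by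
    obtain ⟨y, hy⟩ : ∃ y, Φ u y ≠ 0 := by
      by_contra! h
      exact hu0 (hnd.1 u h)
    exact ⟨(Φ u y)⁻¹ • y, by simp [hy]⟩
  obtain ⟨v, hvv, huv, -⟩ := exists_isotropic_partner h2 hΦ (huU u hu.1) hv₀
  -- `w` will be the image of `v`: it pairs with `σ U` as `v` pairs with `U`, and is isotropic.
  obtain ⟨w₀, hw₀⟩ := exists_apply_eq_of_disjoint_ker hnd hinj (Φ.flip v)
  obtain ⟨w, hww, -, hw⟩ := exists_isotropic_partner h2 hΦ
    (by rw [hσ u hu.1 u hu.1, huU u hu.1]) ((hw₀ u hu.1).trans huv)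
  set σ' := σ + (Φ u).smulRight (w - σ v)
  have hσ'U : Set.EqOn σ' σ U := fun p hp => by simp [σ', huU p hp]
  have hσ'v : σ' v = w := by simp [σ', huv]
  have hσ'' : ∀ x ∈ U ⊔ F ∙ v, ∀ y ∈ U ⊔ F ∙ v, Φ (σ' x) (σ' y) = Φ x y := by
    refine apply_apply_eq_of_mem_sup_span_singleton hΦ (fun p hp q hq => ?_) (fun p hp => ?_)
      (by rw [hσ'v, hww, hvv])
    · rw [hσ'U hp, hσ'U hq, hσ p hp q hq]
    · rw [hσ'U hp, hσ'v, hw _ (by rw [hσ p hp u hu.1, hu.2 p hp]), hw₀ p hp, flip_apply]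
  refine ⟨v, fun hv => by simp [huU v hv] at huv, σ', hσ'U, ?_, hσ''⟩
  refine disjoint_sup_span_singleton_ker hσ'' (disjoint_def.mpr fun p hp hp' => ?_) hu.1 huU
    (by simp [huv])
  exact disjoint_def.mp hinj p hp (by rwa [LinearMap.mem_ker, ← hσ'U hp])

theorem exists_isOrthogonal_eqOn [FiniteDimensional F X] (h2 : (2 : F) ≠ 0)
    (hΦ : Φ.IsSymm ∨ Φ.IsAlt) (hnd : Φ.Nondegenerate) (U : Submodule F X) (σ : X →ₗ[F] X)
    (hinj : Disjoint U (LinearMap.ker σ)) (hσ : ∀ u ∈ U, ∀ v ∈ U, Φ (σ u) (σ v) = Φ u v) :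
    ∃ τ : X ≃ₗ[F] X, Φ.IsOrthogonal τ ∧ Set.EqOn τ σ U := by
  induction U using WellFoundedGT.induction generalizing σ with | ind U IH =>
  by_cases hU : Disjoint U (Φ.orthogonal U)
  · exact exists_isOrthogonal_eqOn_of_disjoint h2 hΦ hnd U hU σ hσ
  obtain ⟨u, hu, hu0⟩ := (U ⊓ Φ.orthogonal U).ne_bot_iff.mp fun h => hU (disjoint_iff.mpr h)
  obtain ⟨v, hv, σ', hσ'U, hinj', hσ'⟩ := exists_extend_sup_span_singleton h2 hΦ hnd hinj hσ hu hu0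
  obtain ⟨τ, hτ, hτU⟩ := IH _ (left_lt_sup.mpr (by rwa [span_singleton_le_iff_mem])) σ' hinj' hσ'
  exact ⟨τ, hτ, fun p hp => (hτU (mem_sup_left hp)).trans (hσ'U hp)⟩

end LinearMap.BilinForm

theorem shahidi_lemma_general
    (F : Type*) [Field F] (hchar : (2 : F) ≠ 0)
    (W W' X : Type*)
    [AddCommGroup W] [Module F W]
    [AddCommGroup W'] [Module F W']
    [AddCommGroup X] [Module F X] [FiniteDimensional F X]
    (ε : F) (hε : ε = 1 ∨ ε = -1)
    (Bp : W' →ₗ[F] W →ₗ[F] F)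
    (hBp2 : ∀ w : W, (∀ w' : W', Bp w' w = 0) → w = 0)
    (Φ : X →ₗ[F] X →ₗ[F] F)
    (hΦnd : ∀ x : X, (∀ y : X, Φ x y = 0) → x = 0)
    (hΦε : ∀ x y : X, Φ x y = ε * Φ y x)
    (ξ : X →ₗ[F] W) (ξs : W' →ₗ[F] X)
    (hξs : ∀ (w' : W') (x : X), Φ (ξs w') x = Bp w' (ξ x))
    (g : X ≃ₗ[F] X)
    (ξgs : W' →ₗ[F] X)
    (hξgs : ∀ (w' : W') (x : X), Φ (ξgs w') x = Bp w' (ξ (g x)))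
    (hyp : ∀ w' : W', ξ (ξs w') = ξ (g (ξgs w'))) :
    ∃ h : X ≃ₗ[F] X, (∀ x y : X, Φ (h x) (h y) = Φ x y) ∧ ∀ x : X, ξ (g x) = ξ (h x) := by
  have hnd : Φ.Nondegenerate := LinearMap.BilinForm.Nondegenerate.ofSeparatingLeft hΦnd
  set g' := LinearMap.BilinForm.leftAdjointOfNondegenerate Φ hnd g
  have hg'g : ∀ x y, Φ (g' x) y = Φ x (g y) :=
    LinearMap.BilinForm.isAdjointPairLeftAdjointOfNondegenerate Φ hnd g
  have hg' (w' : W') : g' (ξs w') = ξgs w' := sub_eq_zero.mp <| hΦnd _ fun x => by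
    rw [map_sub, LinearMap.sub_apply, hg'g, hξs, hξgs, sub_self]
  have hinj : Disjoint (LinearMap.range ξs) (LinearMap.ker g') := by
    refine disjoint_def.mpr ?_
    rintro _ ⟨w', rfl⟩ hw'
    refine hΦnd _ fun x => ?_
    rw [hξs, ← g.apply_symm_apply x, ← hξgs, ← hg', LinearMap.mem_ker.mp hw', map_zero,
      LinearMap.zero_apply]
  have hiso : ∀ u ∈ LinearMap.range ξs, ∀ v ∈ LinearMap.range ξs, Φ (g' u) (g' v) = Φ u v := by
    rintro _ ⟨w₁, rfl⟩ _ ⟨w₂, rfl⟩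
    rw [hg', hg', hξgs, ← hyp, hξs]
  obtain ⟨τ, hτ, hτU⟩ := LinearMap.BilinForm.exists_isOrthogonal_eqOn hchar
    (LinearMap.BilinForm.isSymm_or_isAlt_of_forall_eq_mul hchar hε hΦε) hnd _ g' hinj hiso
  refine ⟨τ.symm, hτ.symm, fun x => sub_eq_zero.mp <| hBp2 _ fun w' => ?_⟩
  rw [map_sub, ← hξgs, ← hξs, ← hg', ← hτU (LinearMap.mem_range_self ξs w'),
    ← hτ (ξs w') (τ.symm x), τ.apply_symm_apply, sub_self]

/-- Shahidi's Lemma: if `g ∈ GL(X)` satisfies `ξ ξ* = (ξ g)(ξ g)*`, then there exists an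
isometry `h ∈ H = Isom(X, Φ)` with `ξ g = ξ h`.  Here `ξs = ξ*` is the adjoint of `ξ` and
`ξgs = (ξ g)*` is the adjoint of `ξ ∘ g`, both with respect to the pairing `Bp` between
`W'` and `W` and the nondegenerate form `Φ` on `X`. -/
theorem shahidi_lemma
    (F : Type*) [Field F] (hchar : (2 : F) ≠ 0)
    (W W' X : Type*)
    [AddCommGroup W] [Module F W] [FiniteDimensional F W]
    [AddCommGroup W'] [Module F W'] [FiniteDimensional F W']
    [AddCommGroup X] [Module F X] [FiniteDimensional F X]
    (ε : F) (hε : ε = 1 ∨ ε = -1)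
    (Bp : W' →ₗ[F] W →ₗ[F] F)
    (hBp1 : ∀ w' : W', (∀ w : W, Bp w' w = 0) → w' = 0)
    (hBp2 : ∀ w : W, (∀ w' : W', Bp w' w = 0) → w = 0)
    (Φ : X →ₗ[F] X →ₗ[F] F)
    (hΦnd : ∀ x : X, (∀ y : X, Φ x y = 0) → x = 0)
    (hΦε : ∀ x y : X, Φ x y = ε * Φ y x)
    (ξ : X →ₗ[F] W) (ξs : W' →ₗ[F] X)
    (hξs : ∀ (w' : W') (x : X), Φ (ξs w') x = Bp w' (ξ x))
    (g : X ≃ₗ[F] X)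
    (ξgs : W' →ₗ[F] X)
    (hξgs : ∀ (w' : W') (x : X), Φ (ξgs w') x = Bp w' (ξ (g x)))
    (hyp : ∀ w' : W', ξ (ξs w') = ξ (g (ξgs w'))) :
    ∃ h : X ≃ₗ[F] X, (∀ x y : X, Φ (h x) (h y) = Φ x y) ∧ ∀ x : X, ξ (g x) = ξ (h x) :=
  shahidi_lemma_general F hchar W W' X ε hε Bp hBp2 Φ hΦnd hΦε ξ ξs hξs g ξgs hξgs hyp
end

section
/- Let T ≅ (F̄^×)^r be a split maximal torus of a classical group H = Isom(X, Φ), realized as diagonal elements diag(t₁,…,t_r,…,t_r^{-1},t₁^{-1}) (with possibly a fixed central block of 1's). Fix an even integer k ≤ dim X, and let T_k = {γ ∈ T : rank(γ − 1; X) ≤ k}. Then the irreducible components of the variety T_k are exactly the subtori S_σ = {(a_i) ∈ T : a_i = 1 for i ∉ σ} for subsets σ ⊆ {1,…,r} with |σ| = k/2; in particular every torus contained in T_k has dimension at most k/2, and any two subtori of T_k of dimension k/2 are conjugate by the Weyl group of T. -/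
/-- The diagonal action of the split maximal torus `T ≅ (Kˣ)^r` of a classical group on
`X = K^r × K^m × K^r`, by `diag(t₁,…,t_r)` on the first block, trivially on the central
block (of size `m ≤ 1`), and by `diag(t₁⁻¹,…,t_r⁻¹)` on the last block. -/
def torusAct (K : Type*) [Field K] (r m : ℕ) (t : Fin r → Kˣ) :
    ((Fin r → K) × (Fin m → K) × (Fin r → K)) →ₗ[K]
      ((Fin r → K) × (Fin m → K) × (Fin r → K)) where
  toFun p := (fun i => (t i : K) * p.1 i, p.2.1, fun i => (((t i)⁻¹ : Kˣ) : K) * p.2.2 i)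
  map_add' p q := by
    refine Prod.ext ?_ (Prod.ext ?_ ?_) <;> funext i <;> simp <;> ring
  map_smul' c p := by
    refine Prod.ext ?_ (Prod.ext ?_ ?_) <;> funext i <;> simp <;> ring

/-- A monomial homomorphism `(Kˣ)^d → (Kˣ)^r` attached to an integer matrix `M`; injective
such homomorphisms model `d`-dimensional subtori of the torus `T = (Kˣ)^r`. -/
def monomialHom (K : Type*) [Field K] (r d : ℕ) (M : Fin r → Fin d → ℤ)
    (s : Fin d → Kˣ) : Fin r → Kˣ :=
  fun i => ∏ j, s j ^ M i j

/-! `torusAct t - 1` is diagonal with entries `tᵢ - 1`, `0`, `tᵢ⁻¹ - 1`, so its rank is twice the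
number of coordinates with `tᵢ ≠ 1`. Hence `T_k` consists of the `t` supported on some `k/2`
coordinates, and the `S_σ` are permuted by coordinate permutations.

For a subtorus given by an injective monomial map `s ↦ (∏ⱼ sⱼ ^ M i j)ᵢ`, evaluate at
`s = (u ^ vⱼ)ⱼ`, whose image is `(u ^ (M v)ᵢ)ᵢ`, for a unit `u` avoiding the finitely many roots of
unity that matter (`K` is infinite). Injectivity then makes `v ↦ M v` injective on `ℤ^d`, so `d` is
at most the number of nonzero rows of `M`. Conversely, with `vⱼ = Bʲ` for `B` outside the roots of
the polynomials `∑ⱼ M i j Xʲ`, every nonzero row gives a nontrivial coordinate of the image, so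
that number is at most `k/2`. -/

open Function
open scoped Matrix Pointwise

universe v

lemma LinearMap.rank_eq_of_comp_linearEquiv {R : Type*} {V W : Type v} [Ring R] [AddCommGroup V]
    [Module R V] [AddCommGroup W] [Module R W] {f : V →ₗ[R] V} {g : W →ₗ[R] W} (e : W ≃ₗ[R] V)
    (h : f ∘ₗ e.toLinearMap = e.toLinearMap ∘ₗ g) : f.rank = g.rank := by
  calc f.rank = (f ∘ₗ e.toLinearMap).rank := by
        rw [LinearMap.rank, LinearMap.rank, LinearMap.range_comp_of_range_eq_top _ e.range]
    _ = g.rank := by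
        rw [h, LinearMap.rank, LinearMap.range_comp, LinearEquiv.rank_map_eq]

lemma nat_card_units_val_sub_one_ne_zero {R ι : Type*} [Ring R] (t : ι → Rˣ) :
    Nat.card {i // (t i : R) - 1 ≠ 0} = (mulSupport t).ncard := by
  rw [← Nat.card_coe_set_eq]
  exact Nat.card_congr (Equiv.subtypeEquivRight fun i => by simp [sub_eq_zero])

lemma rank_torusAct_sub_id (K : Type*) [Field K] (r m : ℕ) (t : Fin r → Kˣ) :
    LinearMap.rank (torusAct K r m t - LinearMap.id) = 2 * (mulSupport t).ncard := by
  classical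
  let e : (Fin r ⊕ Fin m ⊕ Fin r → K) ≃ₗ[K] (Fin r → K) × (Fin m → K) × (Fin r → K) :=
    (LinearEquiv.sumArrowLequivProdArrow _ _ K K).trans
      ((LinearEquiv.refl K _).prodCongr (LinearEquiv.sumArrowLequivProdArrow _ _ K K))
  let w : Fin r ⊕ Fin m ⊕ Fin r → K :=
    Sum.elim (fun i => (t i : K) - 1) (Sum.elim 0 fun i => (t⁻¹ i : K) - 1)
  have hconj : (torusAct K r m t - LinearMap.id) ∘ₗ e.toLinearMap =
      e.toLinearMap ∘ₗ Matrix.toLin' (Matrix.diagonal w) := by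
    refine LinearMap.ext fun x => Prod.ext ?_ (Prod.ext ?_ ?_) <;> funext i <;>
      simp [torusAct, e, w, Matrix.mulVec_diagonal] <;> ring
  rw [LinearMap.rank_eq_of_comp_linearEquiv e hconj, LinearMap.rank_diagonal,
    ← Nat.card_eq_fintype_card, Nat.card_congr Equiv.subtypeSum, Nat.card_sum,
    Nat.card_congr (Equiv.subtypeSum (p := fun c => w (Sum.inr c) ≠ 0)), Nat.card_sum]
  simp only [w, Sum.elim_inl, Sum.elim_inr, nat_card_units_val_sub_one_ne_zero, mulSupport_inv,
    Pi.zero_apply, ne_eq, not_true_eq_false, Nat.card_of_isEmpty]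
  push_cast
  ring

lemma ncard_mulSupport_le_iff {ι G : Type*} [Fintype ι] [One G] {c : ℕ}
    (hc : c ≤ Fintype.card ι) (t : ι → G) :
    (mulSupport t).ncard ≤ c ↔ ∃ σ : Finset ι, σ.card = c ∧ ∀ i ∉ σ, t i = 1 := by
  classical
  constructor
  · intro h
    obtain ⟨σ, hsub, hcard⟩ := Finset.exists_superset_card_eq
      (s := (mulSupport t).toFinset) (by rwa [← Set.ncard_eq_toFinset_card']) hc
    refine ⟨σ, hcard, fun i hi => ?_⟩
    by_contra hti
    exact hi (hsub (by simpa using hti))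
  · rintro ⟨σ, rfl, hsub⟩
    simpa using Set.ncard_le_ncard (mulSupport_subset_iff'.mpr hsub : mulSupport t ⊆ σ)

lemma exists_units_zpow_ne_one (K : Type*) [Field K] [Infinite K] {ι : Type*} [Finite ι]
    (n : ι → ℤ) : ∃ u : Kˣ, ∀ i, n i ≠ 0 → u ^ n i ≠ 1 := by
  have : Infinite Kˣ := unitsEquivNeZero.infinite_iff.mpr
    (Set.finite_singleton (0 : K)).infinite_compl.to_subtype
  have hfin : (⋃ i ∈ {i | n i ≠ 0}, (rootsOfUnity (n i).natAbs K : Set Kˣ)).Finite :=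
    (Set.toFinite _).biUnion fun i hi =>
      have : NeZero (n i).natAbs := ⟨Int.natAbs_ne_zero.mpr hi⟩
      Set.finite_coe_iff.mp (inferInstanceAs (Finite (rootsOfUnity (n i).natAbs K)))
  obtain ⟨u, hu⟩ := hfin.infinite_compl.nonempty
  exact ⟨u, fun i hi hu1 =>
    hu (Set.mem_biUnion hi (by simpa [mem_rootsOfUnity, pow_natAbs_eq_one]))⟩

lemma Matrix.exists_mulVec_ne_zero {R ι : Type*} [CommRing R] [IsDomain R] [Infinite R] [Finite ι]
    {d : ℕ} (M : Matrix ι (Fin d) R) : ∃ v, ∀ i, M i ≠ 0 → (M *ᵥ v) i ≠ 0 := by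
  classical
  have hfin : (⋃ i ∈ support M, {x : R | (Polynomial.ofFn d (M i)).IsRoot x}).Finite :=
    (Set.toFinite _).biUnion fun i hi => Polynomial.finite_setOfPred_isRoot
      fun h => hi ((Polynomial.injective_ofFn d).eq_iff' (map_zero _) |>.mp h)
  obtain ⟨B, hB⟩ := hfin.infinite_compl.nonempty
  refine ⟨fun j => B ^ (j : ℕ), fun i hi h0 => hB (Set.mem_biUnion hi ?_)⟩
  simpa [Polynomial.ofFn_eq_sum_monomial, Polynomial.eval_finsetSum, mulVec, dotProduct] using h0

lemma zpow_finsetSum {G ι : Type*} [CommGroup G] (u : G) (s : Finset ι) (n : ι → ℤ) :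
    u ^ (∑ i ∈ s, n i) = ∏ i ∈ s, u ^ n i := by
  induction s using Finset.cons_induction with
  | empty => simp
  | cons a s ha ih => rw [Finset.sum_cons, Finset.prod_cons, zpow_add, ih]

lemma monomialHom_zpow (K : Type*) [Field K] (r d : ℕ) (M : Matrix (Fin r) (Fin d) ℤ) (u : Kˣ)
    (v : Fin d → ℤ) : monomialHom K r d M (fun j => u ^ v j) = fun i => u ^ (M *ᵥ v) i := by
  funext i
  simp only [monomialHom, Matrix.mulVec, dotProduct, zpow_finsetSum]
  exact Finset.prod_congr rfl fun j _ => by rw [← zpow_mul, mul_comm]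

lemma Matrix.card_le_ncard_support_of_injective {R ι n : Type*} [CommRing R]
    [StrongRankCondition R] [Finite ι] [Fintype n] {M : Matrix ι n R}
    (hM : Injective M.mulVec) : Fintype.card n ≤ (support M).ncard := by
  classical
  have : Fintype ι := Fintype.ofFinite ι
  let φ : (n → R) →ₗ[R] (support M → R) := LinearMap.funLeft R R Subtype.val ∘ₗ Matrix.mulVecLin M
  have hφ : Injective φ := by
    intro v w h
    refine hM (funext fun i => ?_)
    by_cases hi : M i = 0
    · simp [Matrix.mulVec, hi]
    · exact congrFun h ⟨i, hi⟩
  simpa [← Nat.card_coe_set_eq] using LinearMap.finrank_le_finrank_of_injective hφ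

lemma mulVec_injective_of_monomialHom_injective (K : Type*) [Field K] [Infinite K] {r d : ℕ}
    {M : Matrix (Fin r) (Fin d) ℤ} (hM : Injective (monomialHom K r d M)) :
    Injective (Matrix.mulVec M) := by
  refine (injective_iff_map_eq_zero (Matrix.mulVecLin M)).mpr fun v hv => ?_
  obtain ⟨u, hu⟩ := exists_units_zpow_ne_one K v
  have hv1 : (fun j => u ^ v j) = 1 := hM <| by
    rw [Matrix.mulVecLin_apply] at hv
    rw [monomialHom_zpow, hv]
    funext i
    simp [monomialHom]
  by_contra hne
  obtain ⟨j, hj⟩ := Function.ne_iff.mp hne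
  exact hu j hj (congrFun hv1 j)

lemma exists_support_subset_mulSupport_monomialHom (K : Type*) [Field K] [Infinite K]
    (r d : ℕ) (M : Matrix (Fin r) (Fin d) ℤ) :
    ∃ s, support M ⊆ mulSupport (monomialHom K r d M s) := by
  obtain ⟨v, hv⟩ := Matrix.exists_mulVec_ne_zero M
  obtain ⟨u, hu⟩ := exists_units_zpow_ne_one K (M *ᵥ v)
  refine ⟨fun j => u ^ v j, fun i hi => ?_⟩
  rw [mem_mulSupport, monomialHom_zpow]
  exact hu i (hv i hi)

lemma le_of_forall_ncard_mulSupport_monomialHom_le (K : Type*) [Field K] [Infinite K]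
    {r d c : ℕ} {M : Matrix (Fin r) (Fin d) ℤ} (hM : Injective (monomialHom K r d M))
    (hc : ∀ s, (mulSupport (monomialHom K r d M s)).ncard ≤ c) : d ≤ c := by
  obtain ⟨s, hs⟩ := exists_support_subset_mulSupport_monomialHom K r d M
  calc d = Fintype.card (Fin d) := (Fintype.card_fin d).symm
    _ ≤ (support M).ncard :=
      Matrix.card_le_ncard_support_of_injective (mulVec_injective_of_monomialHom_injective K hM)
    _ ≤ (mulSupport (monomialHom K r d M s)).ncard := Set.ncard_le_ncard hs
    _ ≤ c := hc s

lemma Finset.exists_perm_mem_iff_of_card_eq {ι : Type*} [DecidableEq ι] {σ σ' : Finset ι}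
    (h : σ'.card = σ.card) : ∃ π : Equiv.Perm ι, ∀ i, π i ∈ σ ↔ i ∈ σ' := by
  have := Set.powersetCard.isPretransitive (α := ι) (n := σ.card)
  obtain ⟨π, hπ⟩ := MulAction.exists_smul_eq (Equiv.Perm ι)
    (⟨σ', h⟩ : Set.powersetCard ι σ.card) ⟨σ, rfl⟩
  have hσ : π • σ' = σ := congrArg Subtype.val hπ
  refine ⟨π, fun i => ?_⟩
  rw [← hσ, ← Equiv.Perm.smul_def, Finset.smul_mem_smul_finset_iff]

theorem torus_Tk_components_general
    (K : Type*) [Field K] [IsAlgClosed K]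
    (r m k : ℕ) (hm : m ≤ 1) (hk : Even k) (hkX : k ≤ 2 * r + m) :
    ({t : Fin r → Kˣ |
        LinearMap.rank (torusAct K r m t - LinearMap.id) ≤ (k : Cardinal)} =
      ⋃ σ ∈ {σ : Finset (Fin r) | σ.card = k / 2},
        {t : Fin r → Kˣ | ∀ i ∉ σ, t i = 1}) ∧
    (∀ (d : ℕ) (M : Fin r → Fin d → ℤ),
        Function.Injective (monomialHom K r d M) →
        (∀ s : Fin d → Kˣ,
          LinearMap.rank (torusAct K r m (monomialHom K r d M s) - LinearMap.id)
            ≤ (k : Cardinal)) →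
        d ≤ k / 2) ∧
    (∀ σ σ' : Finset (Fin r), σ.card = k / 2 → σ'.card = k / 2 →
        ∃ π : Equiv.Perm (Fin r),
          ∀ t : Fin r → Kˣ, (∀ i ∉ σ, t i = 1) ↔ (∀ i ∉ σ', t (π i) = 1)) := by
  obtain ⟨c, rfl⟩ := hk
  have hc : (c + c) / 2 = c := by omega
  have hrank : ∀ t : Fin r → Kˣ, LinearMap.rank (torusAct K r m t - LinearMap.id) ≤
      ((c + c : ℕ) : Cardinal) ↔ (mulSupport t).ncard ≤ c := by
    intro t
    rw [rank_torusAct_sub_id]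
    norm_cast
    omega
  refine ⟨?_, fun d M hM hMk => ?_, fun σ σ' hσ hσ' => ?_⟩
  · ext t
    simp only [Set.mem_ofPred_eq, Set.mem_iUnion, exists_prop, hrank, hc]
    exact ncard_mulSupport_le_iff (by simp; omega) t
  · rw [hc]
    exact le_of_forall_ncard_mulSupport_monomialHom_le K hM fun s => (hrank _).mp (hMk s)
  · classical
    obtain ⟨π, hπ⟩ := Finset.exists_perm_mem_iff_of_card_eq (hσ'.trans hσ.symm)
    refine ⟨π, fun t => ?_⟩
    rw [← π.forall_congr_right]
    simp only [hπ]

/-- Let `T ≅ (K̄ˣ)^r` be a split maximal torus of a classical group `H = Isom(X, Φ)`,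
acting diagonally on `X` (with a possible fixed central block of size `m ≤ 1`).  Fix an
even `k ≤ dim X` and let `T_k = {γ ∈ T : rank(γ - 1; X) ≤ k}`.  Then: (1) `T_k` is the
union of its irreducible components `S_σ = {t : t_i = 1 for i ∉ σ}` over subsets `σ` of
cardinality `k/2`; (2) every (sub)torus contained in `T_k` has dimension at most `k/2`;
and (3) any two subtori `S_σ, S_σ'` of dimension `k/2` are conjugate by the Weyl group of
`T` (in particular by a permutation of the coordinates). -/
theorem torus_Tk_components
    (K : Type*) [Field K] [IsAlgClosed K] (hchar : (2 : K) ≠ 0)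
    (r m k : ℕ) (hm : m ≤ 1) (hk : Even k) (hkX : k ≤ 2 * r + m) :
    ({t : Fin r → Kˣ |
        LinearMap.rank (torusAct K r m t - LinearMap.id) ≤ (k : Cardinal)} =
      ⋃ σ ∈ {σ : Finset (Fin r) | σ.card = k / 2},
        {t : Fin r → Kˣ | ∀ i ∉ σ, t i = 1}) ∧
    (∀ (d : ℕ) (M : Fin r → Fin d → ℤ),
        Function.Injective (monomialHom K r d M) →
        (∀ s : Fin d → Kˣ,
          LinearMap.rank (torusAct K r m (monomialHom K r d M s) - LinearMap.id)
            ≤ (k : Cardinal)) →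
        d ≤ k / 2) ∧
    (∀ σ σ' : Finset (Fin r), σ.card = k / 2 → σ'.card = k / 2 →
        ∃ π : Equiv.Perm (Fin r),
          ∀ t : Fin r → Kˣ, (∀ i ∉ σ, t i = 1) ↔ (∀ i ∉ σ', t (π i) = 1)) :=
  torus_Tk_components_general K r m k hm hk hkX
end

section
/- Let ξ : X → W be surjective with nondegenerate kernel E, υ = (ξξ*)^{-1} : W → W', ξ⁺ = ξ*υ, and define Ξ : End(X) → End(W) by Ξ(A) = ξAξ⁺. Then: (a) ξ⁺ξ = P_{E^⊥}, the orthogonal projection onto E^⊥; (b) if A, B ∈ End(X) and A or B commutes with P_E, then Ξ(AB) = Ξ(A)Ξ(B); (c) Ξ restricted to the subgroup M_E = H^{E^⊥}·H^E of isometries preserving E is a group homomorphism to GL(W) with kernel H^{E^⊥}, and Ξ restricted to H^E is injective. -/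
/-!
Write `ξ⁺ = ξ* υ`. Since `ξ ξ⁺ = 1`, every `x` splits as `(x - ξ⁺ ξ x) + ξ⁺ ξ x` with the
first summand in `E = ker ξ`, and the second lies in `E^⊥` because
`Φ (ξ* w') e = ⟨w', ξ e⟩ = 0` for `e ∈ E`. As `Φ` is nondegenerate on `E`, a vector of `E^⊥`
is determined by its image under `ξ`; this gives `ξ⁺ ξ = P_{E^⊥}`. Consequently
`Ξ(A)Ξ(B) = ξ A P_{E^⊥} B ξ⁺` differs from `Ξ(AB)` by `ξ A P_E B ξ⁺`, which vanishes when `A`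
or `B` commutes with `P_E`, or when `B` is an isometry stabilizing `E`: by finite
dimensionality `B E = E`, so `B` also stabilizes `E^⊥`. An isometry `h` of `M_E` with
`Ξ(h) = 1` fixes every `x ∈ E^⊥`, since `h x` and `x` both lie in `E^⊥` and have the same
image under `ξ`; and two isometries fixing `E` with equal `Ξ` agree on `E^⊥ = ξ⁺ W`, hence
everywhere.
-/

open LinearMap

section Orthogonal

variable {R X : Type*} [CommRing R] [AddCommGroup X] [Module R X]
  {Φ : X →ₗ[R] X →ₗ[R] R} {E : Submodule R X}

theorem eq_of_sub_mem_of_orthogonal (hE : ∀ x ∈ E, (∀ y ∈ E, Φ x y = 0) → x = 0)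
    {x y : X} (hxy : x - y ∈ E) (hx : ∀ e ∈ E, Φ x e = 0) (hy : ∀ e ∈ E, Φ y e = 0) :
    x = y :=
  sub_eq_zero.mp <| hE _ hxy fun e he => by
    rw [map_sub, LinearMap.sub_apply, hx e he, hy e he, sub_self]

theorem LinearMap.IsOrthogonal.map_orthogonal {h : X ≃ₗ[R] X} (hiso : Φ.IsOrthogonal h)
    (hsymm : ∀ e ∈ E, h.symm e ∈ E) {y : X} (hy : ∀ e ∈ E, Φ y e = 0) :
    ∀ e ∈ E, Φ (h y) e = 0 := fun e he => by
  rw [← h.apply_symm_apply e, hiso]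
  exact hy _ (hsymm e he)

end Orthogonal

theorem LinearEquiv.symm_mem_of_forall_mem {K X : Type*} [DivisionRing K] [AddCommGroup X]
    [Module K X] [FiniteDimensional K X] (h : X ≃ₗ[K] X) {E : Submodule K X}
    (hE : ∀ e ∈ E, h e ∈ E) : ∀ e ∈ E, h.symm e ∈ E := by
  have hmap : E.map (h : X →ₗ[K] X) = E :=
    Submodule.eq_of_le_of_finrank_eq (by rintro _ ⟨e, he, rfl⟩; exact hE e he)
      (LinearEquiv.finrank_map_eq h E)
  intro e he
  rw [← hmap] at he
  exact (Submodule.mem_map_equiv E).mp he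

/-- `PE`, `PEo` play `P_E`, `P_{E^⊥}`; orthogonality to `E` is taken in the first argument
of `Φ`. -/
structure IsOrthogonalProjections {R X : Type*} [CommRing R] [AddCommGroup X] [Module R X]
    (Φ : X →ₗ[R] X →ₗ[R] R) (E : Submodule R X) (PE PEo : X →ₗ[R] X) : Prop where
  add_eq : ∀ x, PE x + PEo x = x
  proj_mem : ∀ x, PE x ∈ E
  projOrth_orthogonal : ∀ x, ∀ e ∈ E, Φ (PEo x) e = 0

theorem IsOrthogonalProjections.proj_eq_zero {R X : Type*} [CommRing R] [AddCommGroup X]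
    [Module R X] {Φ : X →ₗ[R] X →ₗ[R] R} {E : Submodule R X} {PE PEo : X →ₗ[R] X}
    (hP : IsOrthogonalProjections Φ E PE PEo) (hE : ∀ x ∈ E, (∀ y ∈ E, Φ x y = 0) → x = 0)
    {x : X} (hx : ∀ e ∈ E, Φ x e = 0) : PE x = 0 :=
  hE _ (hP.proj_mem x) fun e he => by
    have := congrArg (Φ · e) (hP.add_eq x)
    rwa [map_add, LinearMap.add_apply, hP.projOrth_orthogonal x e he, hx e he, add_zero] at this

/-- `ξp` plays the role of `ξ⁺ = ξ* υ`. -/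
structure IsOrthogonalRightInverse {R X W : Type*} [CommRing R] [AddCommGroup X] [Module R X]
    [AddCommGroup W] [Module R W] (Φ : X →ₗ[R] X →ₗ[R] R) (ξ : X →ₗ[R] W) (ξp : W →ₗ[R] X) :
    Prop where
  apply_apply : ∀ w, ξ (ξp w) = w
  orthogonal : ∀ w, ∀ e ∈ ker ξ, Φ (ξp w) e = 0

def Xi {R X W : Type*} [CommRing R] [AddCommGroup X] [Module R X] [AddCommGroup W] [Module R W]
    (ξ : X →ₗ[R] W) (ξp : W →ₗ[R] X) (A : X →ₗ[R] X) : W →ₗ[R] W :=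
  ξ ∘ₗ A ∘ₗ ξp

namespace IsOrthogonalRightInverse

variable {R X W : Type*} [CommRing R] [AddCommGroup X] [Module R X] [AddCommGroup W] [Module R W]
  {Φ : X →ₗ[R] X →ₗ[R] R} {ξ : X →ₗ[R] W} {ξp : W →ₗ[R] X}

theorem apply_of_orthogonal (hξp : IsOrthogonalRightInverse Φ ξ ξp)
    (hE : ∀ x ∈ ker ξ, (∀ y ∈ ker ξ, Φ x y = 0) → x = 0) {x : X}
    (hx : ∀ e ∈ ker ξ, Φ x e = 0) : ξp (ξ x) = x :=
  eq_of_sub_mem_of_orthogonal hE (by rw [mem_ker, map_sub, hξp.apply_apply, sub_self])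
    (hξp.orthogonal _) hx

theorem apply_eq_projOrth (hξp : IsOrthogonalRightInverse Φ ξ ξp)
    (hE : ∀ x ∈ ker ξ, (∀ y ∈ ker ξ, Φ x y = 0) → x = 0) {PE PEo : X →ₗ[R] X}
    (hP : IsOrthogonalProjections Φ (ker ξ) PE PEo) (x : X) : ξp (ξ x) = PEo x := by
  have hξ : ξ (PEo x) = ξ x := by
    conv_rhs => rw [← hP.add_eq x, map_add, mem_ker.mp (hP.proj_mem x), zero_add]
  rw [← hξ, hξp.apply_of_orthogonal hE (hP.projOrth_orthogonal x)]

theorem Xi_comp_of_orthogonal (hξp : IsOrthogonalRightInverse Φ ξ ξp)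
    (hE : ∀ x ∈ ker ξ, (∀ y ∈ ker ξ, Φ x y = 0) → x = 0) (A : X →ₗ[R] X) {B : X →ₗ[R] X}
    (hB : ∀ w, ∀ e ∈ ker ξ, Φ (B (ξp w)) e = 0) : Xi ξ ξp (A ∘ₗ B) = Xi ξ ξp A ∘ₗ Xi ξ ξp B := by
  ext w
  simp only [Xi, comp_apply, hξp.apply_of_orthogonal hE (hB w)]

theorem Xi_comp_of_commute (hξp : IsOrthogonalRightInverse Φ ξ ξp)
    (hE : ∀ x ∈ ker ξ, (∀ y ∈ ker ξ, Φ x y = 0) → x = 0) {PE PEo : X →ₗ[R] X}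
    (hP : IsOrthogonalProjections Φ (ker ξ) PE PEo) {A B : X →ₗ[R] X}
    (hAB : A ∘ₗ PE = PE ∘ₗ A ∨ B ∘ₗ PE = PE ∘ₗ B) :
    Xi ξ ξp (A ∘ₗ B) = Xi ξ ξp A ∘ₗ Xi ξ ξp B := by
  rcases hAB with hA | hB
  · ext w
    have hAPE : ξ (A (PE (B (ξp w)))) = 0 := by
      rw [← comp_apply A PE, hA, comp_apply, mem_ker.mp (hP.proj_mem _)]
    simp only [Xi, comp_apply, hξp.apply_eq_projOrth hE hP]
    conv_lhs => rw [← hP.add_eq (B (ξp w)), map_add, map_add, hAPE, zero_add]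
  · refine hξp.Xi_comp_of_orthogonal hE A fun w => ?_
    have hPE : PE (B (ξp w)) = 0 := by
      rw [← comp_apply PE B, ← hB, comp_apply, hP.proj_eq_zero hE (hξp.orthogonal w), map_zero]
    rw [← hP.add_eq (B (ξp w)), hPE, zero_add]
    exact hP.projOrth_orthogonal _

theorem Xi_comp_of_isometry (hξp : IsOrthogonalRightInverse Φ ξ ξp)
    (hE : ∀ x ∈ ker ξ, (∀ y ∈ ker ξ, Φ x y = 0) → x = 0) (A : X →ₗ[R] X) {h : X ≃ₗ[R] X}
    (hiso : Φ.IsOrthogonal h) (hsymm : ∀ e ∈ ker ξ, h.symm e ∈ ker ξ) :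
    Xi ξ ξp (A ∘ₗ h) = Xi ξ ξp A ∘ₗ Xi ξ ξp h :=
  hξp.Xi_comp_of_orthogonal hE A fun w =>
    IsOrthogonal.map_orthogonal hiso hsymm (hξp.orthogonal w)

theorem Xi_eq_id_iff (hξp : IsOrthogonalRightInverse Φ ξ ξp)
    (hE : ∀ x ∈ ker ξ, (∀ y ∈ ker ξ, Φ x y = 0) → x = 0) {h : X ≃ₗ[R] X}
    (hiso : Φ.IsOrthogonal h) (hsymm : ∀ e ∈ ker ξ, h.symm e ∈ ker ξ) :
    Xi ξ ξp h = LinearMap.id ↔ ∀ x : X, (∀ y ∈ ker ξ, Φ x y = 0) → h x = x := by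
  constructor
  · intro hXi x hx
    have hξ : ξ (h x) = ξ x := by
      simpa [Xi, hξp.apply_of_orthogonal hE hx] using LinearMap.congr_fun hXi (ξ x)
    exact eq_of_sub_mem_of_orthogonal hE (by rw [mem_ker, map_sub, hξ, sub_self])
      (IsOrthogonal.map_orthogonal hiso hsymm hx) hx
  · intro hfix
    ext w
    simp [Xi, hfix _ (hξp.orthogonal w), hξp.apply_apply]

theorem eq_of_Xi_eq (hξp : IsOrthogonalRightInverse Φ ξ ξp)
    (hE : ∀ x ∈ ker ξ, (∀ y ∈ ker ξ, Φ x y = 0) → x = 0) {h₁ h₂ : X ≃ₗ[R] X}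
    (hiso₁ : Φ.IsOrthogonal h₁) (hiso₂ : Φ.IsOrthogonal h₂)
    (hfix₁ : ∀ e ∈ ker ξ, h₁ e = e) (hfix₂ : ∀ e ∈ ker ξ, h₂ e = e)
    (hXi : Xi ξ ξp h₁ = Xi ξ ξp h₂) : h₁ = h₂ := by
  have hsymm {h : X ≃ₗ[R] X} (hfix : ∀ e ∈ ker ξ, h e = e) : ∀ e ∈ ker ξ, h.symm e ∈ ker ξ :=
    fun e he => by rwa [h.symm_apply_eq.mpr (hfix e he).symm]
  ext x
  set y := ξp (ξ x)
  have hxy : x - y ∈ ker ξ := by rw [mem_ker, map_sub, hξp.apply_apply, sub_self]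
  have hy : h₁ y = h₂ y :=
    eq_of_sub_mem_of_orthogonal hE
      (by simpa [Xi, sub_eq_zero] using LinearMap.congr_fun hXi (ξ x))
      (IsOrthogonal.map_orthogonal hiso₁ (hsymm hfix₁) (hξp.orthogonal _))
      (IsOrthogonal.map_orthogonal hiso₂ (hsymm hfix₂) (hξp.orthogonal _))
  rw [← sub_add_cancel x y, map_add, map_add, hfix₁ _ hxy, hfix₂ _ hxy, hy]

end IsOrthogonalRightInverse

theorem Xi_properties_general
    (F : Type*) [Field F]
    (W W' X : Type*)
    [AddCommGroup W] [Module F W]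
    [AddCommGroup W'] [Module F W']
    [AddCommGroup X] [Module F X] [FiniteDimensional F X]
    (Bp : W' →ₗ[F] W →ₗ[F] F)
    (Φ : X →ₗ[F] X →ₗ[F] F)
    (ξ : X →ₗ[F] W)
    (hEnd : ∀ x ∈ LinearMap.ker ξ, (∀ y ∈ LinearMap.ker ξ, Φ x y = 0) → x = 0)
    (ξs : W' →ₗ[F] X)
    (hξs : ∀ (w' : W') (x : X), Φ (ξs w') x = Bp w' (ξ x))
    -- υ is the inverse of ξ ξ* :
    (υ : W →ₗ[F] W')
    (hυ1 : ∀ w : W, ξ (ξs (υ w)) = w)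
    -- the orthogonal projections onto E = ker ξ and E^⊥ :
    (PE PEo : X →ₗ[F] X)
    (hPsum : PE + PEo = LinearMap.id)
    (hPE1 : ∀ x : X, PE x ∈ LinearMap.ker ξ)
    (hPEo : ∀ x : X, ∀ y ∈ LinearMap.ker ξ, Φ (PEo x) y = 0) :
    -- (a) ξ⁺ ξ = P_{E^⊥}
    (∀ x : X, ξs (υ (ξ x)) = PEo x) ∧
    -- (b) Ξ is multiplicative on operators commuting with P_E
    (∀ A B : X →ₗ[F] X, (A ∘ₗ PE = PE ∘ₗ A ∨ B ∘ₗ PE = PE ∘ₗ B) →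
      ξ ∘ₗ (A ∘ₗ B) ∘ₗ (ξs ∘ₗ υ) =
        (ξ ∘ₗ A ∘ₗ (ξs ∘ₗ υ)) ∘ₗ (ξ ∘ₗ B ∘ₗ (ξs ∘ₗ υ))) ∧
    -- (c) Ξ is a homomorphism on M_E ...
    (∀ h₁ h₂ : X ≃ₗ[F] X,
      (∀ x y : X, Φ (h₁ x) (h₁ y) = Φ x y) → (∀ x y : X, Φ (h₂ x) (h₂ y) = Φ x y) →
      (∀ e ∈ LinearMap.ker ξ, h₁ e ∈ LinearMap.ker ξ) →
      (∀ e ∈ LinearMap.ker ξ, h₂ e ∈ LinearMap.ker ξ) →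
      ξ ∘ₗ ((h₁.toLinearMap ∘ₗ h₂.toLinearMap) ∘ₗ (ξs ∘ₗ υ)) =
        (ξ ∘ₗ h₁.toLinearMap ∘ₗ (ξs ∘ₗ υ)) ∘ₗ (ξ ∘ₗ h₂.toLinearMap ∘ₗ (ξs ∘ₗ υ))) ∧
    -- ... with kernel H^{E^⊥} ...
    (∀ h : X ≃ₗ[F] X,
      (∀ x y : X, Φ (h x) (h y) = Φ x y) →
      (∀ e ∈ LinearMap.ker ξ, h e ∈ LinearMap.ker ξ) →
      (ξ ∘ₗ h.toLinearMap ∘ₗ (ξs ∘ₗ υ) = LinearMap.id ↔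
        ∀ x : X, (∀ y ∈ LinearMap.ker ξ, Φ x y = 0) → h x = x)) ∧
    -- ... and Ξ is injective on H^E
    (∀ h₁ h₂ : X ≃ₗ[F] X,
      (∀ x y : X, Φ (h₁ x) (h₁ y) = Φ x y) → (∀ x y : X, Φ (h₂ x) (h₂ y) = Φ x y) →
      (∀ e ∈ LinearMap.ker ξ, h₁ e = e) → (∀ e ∈ LinearMap.ker ξ, h₂ e = e) →
      ξ ∘ₗ h₁.toLinearMap ∘ₗ (ξs ∘ₗ υ) = ξ ∘ₗ h₂.toLinearMap ∘ₗ (ξs ∘ₗ υ) →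
      h₁ = h₂) := by
  have hξp : IsOrthogonalRightInverse Φ ξ (ξs ∘ₗ υ) :=
    ⟨hυ1, fun w e he => by rw [comp_apply, hξs, mem_ker.mp he, map_zero]⟩
  have hP : IsOrthogonalProjections Φ (ker ξ) PE PEo :=
    ⟨fun x => LinearMap.congr_fun hPsum x, hPE1, hPEo⟩
  refine ⟨hξp.apply_eq_projOrth hEnd hP, fun A B hAB => hξp.Xi_comp_of_commute hEnd hP hAB,
    fun h₁ h₂ _ hiso₂ _ hE₂ => ?_, fun h hiso hEh => ?_,
    fun h₁ h₂ hiso₁ hiso₂ hfix₁ hfix₂ => hξp.eq_of_Xi_eq hEnd hiso₁ hiso₂ hfix₁ hfix₂⟩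
  · exact hξp.Xi_comp_of_isometry hEnd h₁ hiso₂ (h₂.symm_mem_of_forall_mem hE₂)
  · exact hξp.Xi_eq_id_iff hEnd hiso (h.symm_mem_of_forall_mem hEh)

/-- Let `ξ : X → W` be surjective with nondegenerate kernel `E`, `υ = (ξ ξ*)⁻¹ : W → W'`,
`ξ⁺ = ξ* υ`, and `Ξ(A) = ξ A ξ⁺`.  Let `P_E, P_{E^⊥}` be the orthogonal projections of
`X` onto `E` and `E^⊥`.  Then: (a) `ξ⁺ ξ = P_{E^⊥}`; (b) if `A` or `B` commutes with
`P_E`, then `Ξ(A B) = Ξ(A) Ξ(B)`; (c) `Ξ` restricted to the stabilizer `M_E` of `E` in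
`H = Isom(X, Φ)` is a group homomorphism into `GL(W)` whose kernel is `H^{E^⊥}` (the
isometries fixing `E^⊥` pointwise), and `Ξ` restricted to `H^E` is injective. -/
theorem Xi_properties
    (F : Type*) [Field F] (hchar : (2 : F) ≠ 0)
    (W W' X : Type*)
    [AddCommGroup W] [Module F W] [FiniteDimensional F W]
    [AddCommGroup W'] [Module F W'] [FiniteDimensional F W']
    [AddCommGroup X] [Module F X] [FiniteDimensional F X]
    (ε : F) (hε : ε = 1 ∨ ε = -1)
    (Bp : W' →ₗ[F] W →ₗ[F] F)
    (hBp1 : ∀ w' : W', (∀ w : W, Bp w' w = 0) → w' = 0)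
    (hBp2 : ∀ w : W, (∀ w' : W', Bp w' w = 0) → w = 0)
    (Φ : X →ₗ[F] X →ₗ[F] F)
    (hΦnd : ∀ x : X, (∀ y : X, Φ x y = 0) → x = 0)
    (hΦε : ∀ x y : X, Φ x y = ε * Φ y x)
    (ξ : X →ₗ[F] W) (hξsurj : Function.Surjective ξ)
    (hEnd : ∀ x ∈ LinearMap.ker ξ, (∀ y ∈ LinearMap.ker ξ, Φ x y = 0) → x = 0)
    (ξs : W' →ₗ[F] X)
    (hξs : ∀ (w' : W') (x : X), Φ (ξs w') x = Bp w' (ξ x))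
    -- υ is the inverse of ξ ξ* :
    (υ : W →ₗ[F] W')
    (hυ1 : ∀ w : W, ξ (ξs (υ w)) = w) (hυ2 : ∀ w' : W', υ (ξ (ξs w')) = w')
    -- the orthogonal projections onto E = ker ξ and E^⊥ :
    (PE PEo : X →ₗ[F] X)
    (hPsum : PE + PEo = LinearMap.id)
    (hPE1 : ∀ x : X, PE x ∈ LinearMap.ker ξ)
    (hPE2 : ∀ x ∈ LinearMap.ker ξ, PE x = x)
    (hPEo : ∀ x : X, ∀ y ∈ LinearMap.ker ξ, Φ (PEo x) y = 0) :
    -- (a) ξ⁺ ξ = P_{E^⊥}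
    (∀ x : X, ξs (υ (ξ x)) = PEo x) ∧
    -- (b) Ξ is multiplicative on operators commuting with P_E
    (∀ A B : X →ₗ[F] X, (A ∘ₗ PE = PE ∘ₗ A ∨ B ∘ₗ PE = PE ∘ₗ B) →
      ξ ∘ₗ (A ∘ₗ B) ∘ₗ (ξs ∘ₗ υ) =
        (ξ ∘ₗ A ∘ₗ (ξs ∘ₗ υ)) ∘ₗ (ξ ∘ₗ B ∘ₗ (ξs ∘ₗ υ))) ∧
    -- (c) Ξ is a homomorphism on M_E ...
    (∀ h₁ h₂ : X ≃ₗ[F] X,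
      (∀ x y : X, Φ (h₁ x) (h₁ y) = Φ x y) → (∀ x y : X, Φ (h₂ x) (h₂ y) = Φ x y) →
      (∀ e ∈ LinearMap.ker ξ, h₁ e ∈ LinearMap.ker ξ) →
      (∀ e ∈ LinearMap.ker ξ, h₂ e ∈ LinearMap.ker ξ) →
      ξ ∘ₗ ((h₁.toLinearMap ∘ₗ h₂.toLinearMap) ∘ₗ (ξs ∘ₗ υ)) =
        (ξ ∘ₗ h₁.toLinearMap ∘ₗ (ξs ∘ₗ υ)) ∘ₗ (ξ ∘ₗ h₂.toLinearMap ∘ₗ (ξs ∘ₗ υ))) ∧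
    -- ... with kernel H^{E^⊥} ...
    (∀ h : X ≃ₗ[F] X,
      (∀ x y : X, Φ (h x) (h y) = Φ x y) →
      (∀ e ∈ LinearMap.ker ξ, h e ∈ LinearMap.ker ξ) →
      (ξ ∘ₗ h.toLinearMap ∘ₗ (ξs ∘ₗ υ) = LinearMap.id ↔
        ∀ x : X, (∀ y ∈ LinearMap.ker ξ, Φ x y = 0) → h x = x)) ∧
    -- ... and Ξ is injective on H^E
    (∀ h₁ h₂ : X ≃ₗ[F] X,
      (∀ x y : X, Φ (h₁ x) (h₁ y) = Φ x y) → (∀ x y : X, Φ (h₂ x) (h₂ y) = Φ x y) →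
      (∀ e ∈ LinearMap.ker ξ, h₁ e = e) → (∀ e ∈ LinearMap.ker ξ, h₂ e = e) →
      ξ ∘ₗ h₁.toLinearMap ∘ₗ (ξs ∘ₗ υ) = ξ ∘ₗ h₂.toLinearMap ∘ₗ (ξs ∘ₗ υ) →
      h₁ = h₂) :=
  Xi_properties_general F W W' X Bp Φ ξ hEnd ξs hξs υ hυ1 PE PEo hPsum hPE1 hPEo
end

section
/- In the setting above, define the bilinear form Ψ_W on W by Ψ_W(w₁, w₂) = Φ(ξ⁺w₁, ξ⁺w₂), and the antiautomorphism τ on End(W) by τ(A) = υ^{-1} A* υ. Then: (a) Ψ_W(w₁, w₂) = Φ(w₁, υw₂) and Ψ_W is nondegenerate; (b) Ψ_W(gw₁, w₂) = Ψ_W(w₁, τ(g)w₂) for all g ∈ End(W); (c) τ(Ξ(A)) = Ξ(A*) for all A ∈ End(X); (d) the fixed point group of the involution θ(g) = τ(g)^{-1} on GL(W) equals Isom(W, Ψ_W). -/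
/-!
Everything rests on `Ψ_W(w₁, w₂) = Bp (υ w₁) w₂`, which follows from the defining property of
`ξ*` together with `ξ ξ* υ = 1`. As `υ` is bijective, `Ψ_W` is therefore nondegenerate; it
inherits `ε`-symmetry from `Φ`, and `τ(g) = ξ ξ* g* υ` is the adjoint of `g` with respect to it.
Hence `Ψ_W(g w₁, g w₂) = Ψ_W(w₁, τ(g) g w₂)`, so by nondegeneracy `g` is an isometry exactly
when `τ(g) g = 1`, i.e. when `θ(g) = g`.
-/

namespace LinearMap

variable {R M : Type*} [CommRing R] [AddCommGroup M] [Module R M]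

theorem SeparatingRight.eq_of_forall_apply_eq {B : M →ₗ[R] M →ₗ[R] R} (hB : B.SeparatingRight)
    {y z : M} (h : ∀ x, B x y = B x z) : y = z :=
  sub_eq_zero.mp <| hB _ fun x ↦ by rw [map_sub, h, sub_self]

theorem IsAdjointPair.comp_eq_id_iff {B : M →ₗ[R] M →ₗ[R] R} (hB : B.SeparatingRight)
    {g t : M →ₗ[R] M} (h : B.IsAdjointPair B g t) :
    t ∘ₗ g = LinearMap.id ↔ ∀ x y, B (g x) (g y) = B x y := by
  constructor
  · intro hid x y
    rw [h, ← comp_apply t g, hid, id_apply]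
  · intro hiso
    ext y
    exact hB.eq_of_forall_apply_eq fun x ↦ by rw [comp_apply, ← h, hiso, id_apply]

end LinearMap

section TwistedForm

open LinearMap

variable {R W W' X : Type*} [CommRing R] [AddCommGroup W] [Module R W]
  [AddCommGroup W'] [Module R W'] [AddCommGroup X] [Module R X]

def twistedForm (Φ : X →ₗ[R] X →ₗ[R] R) (ξs : W' →ₗ[R] X) (υ : W →ₗ[R] W') :
    W →ₗ[R] W →ₗ[R] R :=
  Φ.compl₁₂ (ξs ∘ₗ υ) (ξs ∘ₗ υ)

/-- `τ(g) = υ⁻¹ g* υ`, with `υ⁻¹ = ξ ξ*`. -/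
def twistedAdjoint (ξ : X →ₗ[R] W) (ξs : W' →ₗ[R] X) (υ : W →ₗ[R] W') (gs : W' →ₗ[R] W') :
    W →ₗ[R] W :=
  ξ ∘ₗ ξs ∘ₗ gs ∘ₗ υ

variable {Bp : W' →ₗ[R] W →ₗ[R] R} {Φ : X →ₗ[R] X →ₗ[R] R} {ξ : X →ₗ[R] W}
  {ξs : W' →ₗ[R] X} {υ : W →ₗ[R] W'}

theorem twistedForm_eq_pairing (hξs : ∀ w' x, Φ (ξs w') x = Bp w' (ξ x))
    (hυ1 : ∀ w, ξ (ξs (υ w)) = w) (w₁ w₂ : W) :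
    twistedForm Φ ξs υ w₁ w₂ = Bp (υ w₁) w₂ := by
  rw [twistedForm, compl₁₂_apply, comp_apply, comp_apply, hξs, hυ1]

theorem twistedForm_eq_mul_pairing {ε : R} (hΦε : ∀ x y, Φ x y = ε * Φ y x)
    (hξs : ∀ w' x, Φ (ξs w') x = Bp w' (ξ x)) (hυ1 : ∀ w, ξ (ξs (υ w)) = w) (w₁ w₂ : W) :
    twistedForm Φ ξs υ w₁ w₂ = ε * Bp (υ w₂) w₁ := by
  rw [twistedForm, compl₁₂_apply, hΦε, ← compl₁₂_apply, ← twistedForm,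
    twistedForm_eq_pairing hξs hυ1]

theorem twistedForm_separatingLeft (hBp : Bp.SeparatingLeft)
    (hξs : ∀ w' x, Φ (ξs w') x = Bp w' (ξ x)) (hυ1 : ∀ w, ξ (ξs (υ w)) = w) :
    (twistedForm Φ ξs υ).SeparatingLeft := by
  intro w h
  have hυw : υ w = 0 := hBp _ fun w₂ ↦ by rw [← twistedForm_eq_pairing hξs hυ1, h]
  rw [← hυ1 w, hυw, map_zero, map_zero]

theorem twistedForm_separatingRight (hBp : Bp.SeparatingRight)
    (hξs : ∀ w' x, Φ (ξs w') x = Bp w' (ξ x)) (hυ1 : ∀ w, ξ (ξs (υ w)) = w)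
    (hυ2 : ∀ w', υ (ξ (ξs w')) = w') :
    (twistedForm Φ ξs υ).SeparatingRight := by
  intro w h
  refine hBp _ fun w' ↦ ?_
  rw [← hυ2 w', ← twistedForm_eq_pairing hξs hυ1, h]

theorem twistedForm_isAdjointPair {ε : R} (hΦε : ∀ x y, Φ x y = ε * Φ y x)
    (hξs : ∀ w' x, Φ (ξs w') x = Bp w' (ξ x)) (hυ1 : ∀ w, ξ (ξs (υ w)) = w)
    (hυ2 : ∀ w', υ (ξ (ξs w')) = w') {g : W →ₗ[R] W} {gs : W' →ₗ[R] W'}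
    (hgs : ∀ w' w, Bp (gs w') w = Bp w' (g w)) :
    (twistedForm Φ ξs υ).IsAdjointPair (twistedForm Φ ξs υ) g (twistedAdjoint ξ ξs υ gs) := by
  intro w₁ w₂
  rw [twistedForm_eq_mul_pairing hΦε hξs hυ1, twistedForm_eq_mul_pairing hΦε hξs hυ1, ← hgs,
    twistedAdjoint, comp_apply, comp_apply, comp_apply, hυ2]

theorem twistedForm_apply_left_eq {ε : R} (hΦε : ∀ x y, Φ x y = ε * Φ y x)
    (hξs : ∀ w' x, Φ (ξs w') x = Bp w' (ξ x)) (hυ1 : ∀ w, ξ (ξs (υ w)) = w) (x : X) (w : W) :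
    twistedForm Φ ξs υ (ξ x) w = Φ x (ξs (υ w)) := by
  rw [twistedForm_eq_mul_pairing hΦε hξs hυ1, ← hξs, ← hΦε]

theorem twistedForm_apply_right_eq (hξs : ∀ w' x, Φ (ξs w') x = Bp w' (ξ x))
    (hυ1 : ∀ w, ξ (ξs (υ w)) = w) (w : W) (x : X) :
    twistedForm Φ ξs υ w (ξ x) = Φ (ξs (υ w)) x := by
  rw [twistedForm_eq_pairing hξs hυ1, hξs]

theorem twistedAdjoint_conj_eq_conj_adjoint {ε : R} (hBp : Bp.SeparatingRight)
    (hΦε : ∀ x y, Φ x y = ε * Φ y x) (hξs : ∀ w' x, Φ (ξs w') x = Bp w' (ξ x))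
    (hυ1 : ∀ w, ξ (ξs (υ w)) = w) (hυ2 : ∀ w', υ (ξ (ξs w')) = w') {A As : X →ₗ[R] X}
    (hA : ∀ x y, Φ (A x) y = Φ x (As y)) {ΞAs : W' →ₗ[R] W'}
    (hΞ : ∀ w' w, Bp (ΞAs w') w = Bp w' (ξ (A (ξs (υ w))))) :
    twistedAdjoint ξ ξs υ ΞAs = ξ ∘ₗ As ∘ₗ ξs ∘ₗ υ := by
  ext w
  refine (twistedForm_separatingRight hBp hξs hυ1 hυ2).eq_of_forall_apply_eq fun w₁ ↦ ?_
  calc twistedForm Φ ξs υ w₁ (twistedAdjoint ξ ξs υ ΞAs w)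
      = twistedForm Φ ξs υ (ξ (A (ξs (υ w₁)))) w :=
        (twistedForm_isAdjointPair (g := ξ ∘ₗ A ∘ₗ ξs ∘ₗ υ) hΦε hξs hυ1 hυ2 hΞ w₁ w).symm
    _ = Φ (ξs (υ w₁)) (As (ξs (υ w))) := by rw [twistedForm_apply_left_eq hΦε hξs hυ1, hA]
    _ = twistedForm Φ ξs υ w₁ (ξ (As (ξs (υ w)))) := (twistedForm_apply_right_eq hξs hυ1 _ _).symm

end TwistedForm

theorem twisted_form_and_involution_general
    (F : Type*) [Field F]
    (W W' X : Type*)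
    [AddCommGroup W] [Module F W]
    [AddCommGroup W'] [Module F W']
    [AddCommGroup X] [Module F X]
    (ε : F)
    (Bp : W' →ₗ[F] W →ₗ[F] F)
    (hBp1 : ∀ w' : W', (∀ w : W, Bp w' w = 0) → w' = 0)
    (hBp2 : ∀ w : W, (∀ w' : W', Bp w' w = 0) → w = 0)
    (Φ : X →ₗ[F] X →ₗ[F] F)
    (hΦε : ∀ x y : X, Φ x y = ε * Φ y x)
    (ξ : X →ₗ[F] W)
    (ξs : W' →ₗ[F] X)
    (hξs : ∀ (w' : W') (x : X), Φ (ξs w') x = Bp w' (ξ x))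
    (υ : W →ₗ[F] W')
    (hυ1 : ∀ w : W, ξ (ξs (υ w)) = w) (hυ2 : ∀ w' : W', υ (ξ (ξs w')) = w') :
    -- (a)
    ((∀ w₁ w₂ : W, Φ (ξs (υ w₁)) (ξs (υ w₂)) = ε * Bp (υ w₂) w₁) ∧
      (∀ w₁ : W, (∀ w₂ : W, Φ (ξs (υ w₁)) (ξs (υ w₂)) = 0) → w₁ = 0)) ∧
    -- (b)  Ψ_W(g w₁, w₂) = Ψ_W(w₁, τ(g) w₂)
    (∀ (g : W →ₗ[F] W) (gs : W' →ₗ[F] W'),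
      (∀ (w' : W') (w : W), Bp (gs w') w = Bp w' (g w)) →
      ∀ w₁ w₂ : W,
        Φ (ξs (υ (g w₁))) (ξs (υ w₂)) =
          Φ (ξs (υ w₁)) (ξs (υ (ξ (ξs (gs (υ w₂))))))) ∧
    -- (c)  τ(Ξ(A)) = Ξ(A*)
    (∀ (A As : X →ₗ[F] X), (∀ x y : X, Φ (A x) y = Φ x (As y)) →
      ∀ ΞAs : W' →ₗ[F] W',
        (∀ (w' : W') (w : W), Bp (ΞAs w') w = Bp w' (ξ (A (ξs (υ w))))) →
        ∀ w : W, ξ (ξs (ΞAs (υ w))) = ξ (As (ξs (υ w)))) ∧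
    -- (d)  θ(g) = g  ↔  g ∈ Isom(W, Ψ_W)
    (∀ (g : W ≃ₗ[F] W) (gs : W' →ₗ[F] W'),
      (∀ (w' : W') (w : W), Bp (gs w') w = Bp w' (g w)) →
      ((∀ w : W, ξ (ξs (gs (υ (g w)))) = w) ↔
        ∀ w₁ w₂ : W, Φ (ξs (υ (g w₁))) (ξs (υ (g w₂))) = Φ (ξs (υ w₁)) (ξs (υ w₂)))) := by
  have hΨ : (twistedForm Φ ξs υ).SeparatingRight := twistedForm_separatingRight hBp2 hξs hυ1 hυ2
  refine ⟨⟨twistedForm_eq_mul_pairing hΦε hξs hυ1, twistedForm_separatingLeft hBp1 hξs hυ1⟩,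
    fun g gs hgs ↦ twistedForm_isAdjointPair hΦε hξs hυ1 hυ2 hgs,
    fun A As hA ΞAs hΞ ↦
      LinearMap.ext_iff.mp (twistedAdjoint_conj_eq_conj_adjoint hBp2 hΦε hξs hυ1 hυ2 hA hΞ),
    fun g gs hgs ↦ ?_⟩
  have hθ := (twistedForm_isAdjointPair (g := g.toLinearMap) hΦε hξs hυ1 hυ2 hgs).comp_eq_id_iff hΨ
  exact LinearMap.ext_iff.symm.trans hθ

/-- Define `Ψ_W(w₁, w₂) = Φ(ξ⁺ w₁, ξ⁺ w₂)` on `W` and the antiautomorphism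
`τ(A) = υ⁻¹ A* υ` of `End(W)`.  Then: (a) `Ψ_W(w₁, w₂) = Φ(w₁, υ w₂)` and `Ψ_W` is
nondegenerate; (b) `Ψ_W(g w₁, w₂) = Ψ_W(w₁, τ(g) w₂)`; (c) `τ(Ξ(A)) = Ξ(A*)`; (d) the
fixed points of the involution `θ(g) = τ(g)⁻¹` on `GL(W)` are exactly `Isom(W, Ψ_W)`.
Here `ξ⁺ = ξ* υ`, `υ = (ξ ξ*)⁻¹`, `Ξ(A) = ξ A ξ⁺`, adjoints on `W` are taken via the
pairing `Bp`, and `Φ(w, w') = ε Bp w' w`. -/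
theorem twisted_form_and_involution
    (F : Type*) [Field F] (hchar : (2 : F) ≠ 0)
    (W W' X : Type*)
    [AddCommGroup W] [Module F W] [FiniteDimensional F W]
    [AddCommGroup W'] [Module F W'] [FiniteDimensional F W']
    [AddCommGroup X] [Module F X] [FiniteDimensional F X]
    (ε : F) (hε : ε = 1 ∨ ε = -1)
    (Bp : W' →ₗ[F] W →ₗ[F] F)
    (hBp1 : ∀ w' : W', (∀ w : W, Bp w' w = 0) → w' = 0)
    (hBp2 : ∀ w : W, (∀ w' : W', Bp w' w = 0) → w = 0)
    (Φ : X →ₗ[F] X →ₗ[F] F)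
    (hΦnd : ∀ x : X, (∀ y : X, Φ x y = 0) → x = 0)
    (hΦε : ∀ x y : X, Φ x y = ε * Φ y x)
    (ξ : X →ₗ[F] W) (hξsurj : Function.Surjective ξ)
    (hEnd : ∀ x ∈ LinearMap.ker ξ, (∀ y ∈ LinearMap.ker ξ, Φ x y = 0) → x = 0)
    (ξs : W' →ₗ[F] X)
    (hξs : ∀ (w' : W') (x : X), Φ (ξs w') x = Bp w' (ξ x))
    (υ : W →ₗ[F] W')
    (hυ1 : ∀ w : W, ξ (ξs (υ w)) = w) (hυ2 : ∀ w' : W', υ (ξ (ξs w')) = w') :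
    -- (a)
    ((∀ w₁ w₂ : W, Φ (ξs (υ w₁)) (ξs (υ w₂)) = ε * Bp (υ w₂) w₁) ∧
      (∀ w₁ : W, (∀ w₂ : W, Φ (ξs (υ w₁)) (ξs (υ w₂)) = 0) → w₁ = 0)) ∧
    -- (b)  Ψ_W(g w₁, w₂) = Ψ_W(w₁, τ(g) w₂)
    (∀ (g : W →ₗ[F] W) (gs : W' →ₗ[F] W'),
      (∀ (w' : W') (w : W), Bp (gs w') w = Bp w' (g w)) →
      ∀ w₁ w₂ : W,
        Φ (ξs (υ (g w₁))) (ξs (υ w₂)) =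
          Φ (ξs (υ w₁)) (ξs (υ (ξ (ξs (gs (υ w₂))))))) ∧
    -- (c)  τ(Ξ(A)) = Ξ(A*)
    (∀ (A As : X →ₗ[F] X), (∀ x y : X, Φ (A x) y = Φ x (As y)) →
      ∀ ΞAs : W' →ₗ[F] W',
        (∀ (w' : W') (w : W), Bp (ΞAs w') w = Bp w' (ξ (A (ξs (υ w))))) →
        ∀ w : W, ξ (ξs (ΞAs (υ w))) = ξ (As (ξs (υ w)))) ∧
    -- (d)  θ(g) = g  ↔  g ∈ Isom(W, Ψ_W)
    (∀ (g : W ≃ₗ[F] W) (gs : W' →ₗ[F] W'),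
      (∀ (w' : W') (w : W), Bp (gs w') w = Bp w' (g w)) →
      ((∀ w : W, ξ (ξs (gs (υ (g w)))) = w) ↔
        ∀ w₁ w₂ : W, Φ (ξs (υ (g w₁))) (ξs (υ (g w₂))) = Φ (ξs (υ w₁)) (ξs (υ w₂)))) :=
  twisted_form_and_involution_general F W W' X ε Bp hBp1 hBp2 Φ hΦε ξ ξs hξs υ hυ1 hυ2
end

section
/- Let A ∈ End(X) commute with the projection P_E and suppose A restricted to E^⊥ is invertible. Then Ξ(A) = ξAξ⁺ is invertible in End(W), with inverse Ξ(B) where B|_{E^⊥} = (A|_{E^⊥})^{-1} and B|_E = 0. -/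
/-!
Write `σ = ξs ∘ υ`, so that `ξ ∘ σ = 1` and `Q := σ ∘ ξ = P_{E^⊥}` is idempotent with `Q σ = σ`.
If one of `A`, `B` commutes with `Q`, then `Ξ(A) Ξ(B) = ξ A Q B σ = Ξ(A B)`; and if `C Q = Q`
then `Ξ(C) = ξ C Q σ = ξ Q σ = 1`. Since `P_E + Q = 1`, commuting with `P_E` is commuting with `Q`,
and the hypotheses on `Binv` say exactly `A Binv Q = Binv A Q = Q`.
-/

namespace LinearMap

variable {R X W : Type*} [Semiring R] [AddCommMonoid X] [AddCommMonoid W]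
  [Module R X] [Module R W] {ξ : X →ₗ[R] W} {σ : W →ₗ[R] X}

theorem conj_comp_conj_of_commute_left (hσ : ξ ∘ₗ σ = id) {A : Module.End R X}
    (hA : Commute A (σ ∘ₗ ξ)) (B : Module.End R X) :
    (ξ ∘ₗ A ∘ₗ σ) ∘ₗ (ξ ∘ₗ B ∘ₗ σ) = ξ ∘ₗ (A ∘ₗ B) ∘ₗ σ := by
  ext w
  calc ξ (A (σ (ξ (B (σ w))))) = ξ (σ (ξ (A (B (σ w))))) :=
        congrArg ξ (LinearMap.congr_fun hA.eq _)
    _ = ξ (A (B (σ w))) := LinearMap.congr_fun hσ _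

theorem conj_comp_conj_of_commute_right (hσ : ξ ∘ₗ σ = id) {A : Module.End R X}
    (hA : Commute A (σ ∘ₗ ξ)) (B : Module.End R X) :
    (ξ ∘ₗ B ∘ₗ σ) ∘ₗ (ξ ∘ₗ A ∘ₗ σ) = ξ ∘ₗ (B ∘ₗ A) ∘ₗ σ := by
  ext w
  calc ξ (B (σ (ξ (A (σ w))))) = ξ (B (A (σ (ξ (σ w))))) :=
        congrArg (fun x => ξ (B x)) (LinearMap.congr_fun hA.eq (σ w)).symm
    _ = ξ (B (A (σ w))) := congrArg (fun x => ξ (B (A (σ x)))) (LinearMap.congr_fun hσ w)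

theorem conj_eq_id_of_comp_eq_self (hσ : ξ ∘ₗ σ = id) {C : Module.End R X}
    (hC : C ∘ₗ (σ ∘ₗ ξ) = σ ∘ₗ ξ) : ξ ∘ₗ C ∘ₗ σ = id := by
  ext w
  calc ξ (C (σ w)) = ξ (C (σ (ξ (σ w)))) :=
        congrArg (fun x => ξ (C (σ x))) (LinearMap.congr_fun hσ w).symm
    _ = ξ (σ (ξ (σ w))) := congrArg ξ (LinearMap.congr_fun hC (σ w))
    _ = ξ (σ w) := congrArg (fun x => ξ (σ x)) (LinearMap.congr_fun hσ w)
    _ = w := LinearMap.congr_fun hσ w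

end LinearMap

theorem Xi_invertible_general
    (F : Type*) [Field F]
    (W W' X : Type*)
    [AddCommGroup W] [Module F W]
    [AddCommGroup W'] [Module F W']
    [AddCommGroup X] [Module F X]
    (ξ : X →ₗ[F] W)
    (ξs : W' →ₗ[F] X)
    (υ : W →ₗ[F] W')
    (hυ1 : ∀ w : W, ξ (ξs (υ w)) = w)
    (PE PEo : X →ₗ[F] X)
    (hPsum : PE + PEo = LinearMap.id)
    (hproj : ∀ x : X, ξs (υ (ξ x)) = PEo x)
    (A : X →ₗ[F] X) (hcomm : A ∘ₗ PE = PE ∘ₗ A)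
    (Binv : X →ₗ[F] X)
    (hB1 : ∀ x : X, Binv (A (PEo x)) = PEo x)
    (hB2 : ∀ x : X, A (Binv (PEo x)) = PEo x) :
    (ξ ∘ₗ A ∘ₗ (ξs ∘ₗ υ)) ∘ₗ (ξ ∘ₗ Binv ∘ₗ (ξs ∘ₗ υ)) = LinearMap.id ∧
      (ξ ∘ₗ Binv ∘ₗ (ξs ∘ₗ υ)) ∘ₗ (ξ ∘ₗ A ∘ₗ (ξs ∘ₗ υ)) = LinearMap.id ∧
      Function.Bijective (ξ ∘ₗ A ∘ₗ (ξs ∘ₗ υ)) := by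
  have hσ : ξ ∘ₗ (ξs ∘ₗ υ) = LinearMap.id := LinearMap.ext hυ1
  have hQ : (ξs ∘ₗ υ) ∘ₗ ξ = PEo := LinearMap.ext hproj
  have hA : Commute A ((ξs ∘ₗ υ) ∘ₗ ξ) := by
    rw [hQ, eq_sub_of_add_eq' hPsum]
    exact (Commute.one_right A).sub_right hcomm
  have hAB : (A ∘ₗ Binv) ∘ₗ ((ξs ∘ₗ υ) ∘ₗ ξ) = (ξs ∘ₗ υ) ∘ₗ ξ := by
    rw [hQ]; exact LinearMap.ext hB2
  have hBA : (Binv ∘ₗ A) ∘ₗ ((ξs ∘ₗ υ) ∘ₗ ξ) = (ξs ∘ₗ υ) ∘ₗ ξ := by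
    rw [hQ]; exact LinearMap.ext hB1
  have hright := (LinearMap.conj_comp_conj_of_commute_left hσ hA Binv).trans
    (LinearMap.conj_eq_id_of_comp_eq_self hσ hAB)
  have hleft := (LinearMap.conj_comp_conj_of_commute_right hσ hA Binv).trans
    (LinearMap.conj_eq_id_of_comp_eq_self hσ hBA)
  exact ⟨hright, hleft, Function.bijective_iff_has_inverse.mpr
    ⟨ξ ∘ₗ Binv ∘ₗ (ξs ∘ₗ υ), LinearMap.congr_fun hleft, LinearMap.congr_fun hright⟩⟩

/-- Let `A ∈ End(X)` commute with the projection `P_E` and suppose `A` restricted to `E^⊥`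
is invertible, with inverse encoded by `Binv` (`Binv ∘ A = A ∘ Binv = id` on `E^⊥`, and
`Binv = 0` on `E`).  Then `Ξ(A) = ξ A ξ⁺` is invertible in `End(W)` with inverse
`Ξ(Binv)`.  Here `ξ⁺ = ξs ∘ υ`, `ξ⁺ ξ = P_{E^⊥}`, `P_E + P_{E^⊥} = 1`. -/
theorem Xi_invertible
    (F : Type*) [Field F] (hchar : (2 : F) ≠ 0)
    (W W' X : Type*)
    [AddCommGroup W] [Module F W] [FiniteDimensional F W]
    [AddCommGroup W'] [Module F W'] [FiniteDimensional F W']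
    [AddCommGroup X] [Module F X] [FiniteDimensional F X]
    (Φ : X →ₗ[F] X →ₗ[F] F)
    (ξ : X →ₗ[F] W) (hξsurj : Function.Surjective ξ)
    (ξs : W' →ₗ[F] X)
    (υ : W →ₗ[F] W')
    (hυ1 : ∀ w : W, ξ (ξs (υ w)) = w) (hυ2 : ∀ w' : W', υ (ξ (ξs w')) = w')
    (PE PEo : X →ₗ[F] X)
    (hPsum : PE + PEo = LinearMap.id)
    (hPE1 : ∀ x : X, PE x ∈ LinearMap.ker ξ)
    (hPE2 : ∀ x ∈ LinearMap.ker ξ, PE x = x)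
    (hPEo : ∀ x : X, ∀ y ∈ LinearMap.ker ξ, Φ (PEo x) y = 0)
    (hproj : ∀ x : X, ξs (υ (ξ x)) = PEo x)
    (A : X →ₗ[F] X) (hcomm : A ∘ₗ PE = PE ∘ₗ A)
    (Binv : X →ₗ[F] X)
    (hB0 : ∀ x : X, Binv x = Binv (PEo x))
    (hB1 : ∀ x : X, Binv (A (PEo x)) = PEo x)
    (hB2 : ∀ x : X, A (Binv (PEo x)) = PEo x) :
    (ξ ∘ₗ A ∘ₗ (ξs ∘ₗ υ)) ∘ₗ (ξ ∘ₗ Binv ∘ₗ (ξs ∘ₗ υ)) = LinearMap.id ∧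
      (ξ ∘ₗ Binv ∘ₗ (ξs ∘ₗ υ)) ∘ₗ (ξ ∘ₗ A ∘ₗ (ξs ∘ₗ υ)) = LinearMap.id ∧
      Function.Bijective (ξ ∘ₗ A ∘ₗ (ξs ∘ₗ υ)) :=
  Xi_invertible_general F W W' X ξ ξs υ hυ1 PE PEo hPsum hproj A hcomm Binv hB1 hB2
end

section
/- Let h ∈ M_E (an isometry of X preserving E and E^⊥) with (h − 1)|_{E^⊥} invertible, and set h_G = (Ξ(h−1))^{-1} ∈ GL(W). Then: (a) 1 + h_G + τ(h_G) = 0; (b) h_G · θ(h_G) = −Ξ(h^{-1}), where θ(g) = τ(g)^{-1}. -/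
/-!
Write `P = ξs ∘ υ`; it is a section of `ξ` whose image is orthogonal to `E = ker ξ`.
If `z` is orthogonal to `E`, then `Φ u z` only sees `u` modulo `E`, so
`Φ u z = Bp (υ (ξ u)) (ξ z)`. Apply this to both sides of `Φ (h x) (h y) = Φ x y` with
`x = P (h_G v)` and `y = P (h_G w)`. Since `ξ (h x) = v + h_G v`, this gives
`Bp (υ v) w + Bp (υ v) (h_G w) + ε Bp (υ w) (h_G v) = 0`. The last term is the pairing of
`υ v` with `τ(h_G) w`, and this is (a).
By (a), `τ(h_G) w = -ξ (h (P (h_G w)))`. Since `h⁻¹` preserves `E`, applying `Ξ(h⁻¹)`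
to this vector gives back `-h_G w`, and this is (b).
-/

open LinearMap

section SectionPairing

variable {F W W' X : Type*} [CommRing F]
  [AddCommGroup W] [Module F W] [AddCommGroup W'] [Module F W'] [AddCommGroup X] [Module F X]
  {ε : F} {Bp : W' →ₗ[F] W →ₗ[F] F} {Φ : X →ₗ[F] X →ₗ[F] F}
  {ξ : X →ₗ[F] W} {ξs : W' →ₗ[F] X} {υ : W →ₗ[F] W'}

lemma apply_ξs_eq_zero_of_mem_ker
    (hξs : ∀ (w' : W') (x : X), Φ (ξs w') x = Bp w' (ξ x)) (w' : W') {e : X} (he : e ∈ ker ξ) :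
    Φ (ξs w') e = 0 := by
  rw [hξs, mem_ker.mp he, map_zero]

lemma pairing_υ_comm (hΦε : ∀ x y : X, Φ x y = ε * Φ y x)
    (hξs : ∀ (w' : W') (x : X), Φ (ξs w') x = Bp w' (ξ x)) (hυ1 : ∀ w : W, ξ (ξs (υ w)) = w)
    (a b : W) : Bp (υ a) b = ε * Bp (υ b) a := by
  conv_lhs => rw [← hυ1 b, ← hξs, hΦε, hξs, hυ1]

lemma apply_eq_pairing_of_orthogonal (hΦε : ∀ x y : X, Φ x y = ε * Φ y x)
    (hξs : ∀ (w' : W') (x : X), Φ (ξs w') x = Bp w' (ξ x)) (hυ1 : ∀ w : W, ξ (ξs (υ w)) = w)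
    {z : X} (hz : ∀ e ∈ ker ξ, Φ z e = 0) (u : X) :
    Φ u z = Bp (υ (ξ u)) (ξ z) := by
  have hmem : u - ξs (υ (ξ u)) ∈ ker ξ := by rw [mem_ker, map_sub, hυ1, sub_self]
  calc Φ u z = Φ (u - ξs (υ (ξ u))) z + Φ (ξs (υ (ξ u))) z := by
        rw [map_sub, LinearMap.sub_apply, sub_add_cancel]
    _ = Bp (υ (ξ u)) (ξ z) := by rw [hΦε, hz _ hmem, mul_zero, zero_add, hξs]

lemma pairing_τ (hΦε : ∀ x y : X, Φ x y = ε * Φ y x)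
    (hξs : ∀ (w' : W') (x : X), Φ (ξs w') x = Bp w' (ξ x)) (hυ1 : ∀ w : W, ξ (ξs (υ w)) = w)
    {g : W → W} {gs : W' → W'} (hgs : ∀ (w' : W') (w : W), Bp (gs w') w = Bp w' (g w))
    (v w : W) : Bp (υ v) (ξ (ξs (gs (υ w)))) = ε * Bp (υ w) (g v) := by
  rw [← hξs, hΦε, hξs, hυ1, hgs]

lemma pairing_add_pairing_add_pairing_eq_zero (hΦε : ∀ x y : X, Φ x y = ε * Φ y x)
    (hξs : ∀ (w' : W') (x : X), Φ (ξs w') x = Bp w' (ξ x)) (hυ1 : ∀ w : W, ξ (ξs (υ w)) = w)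
    {h : X → X} (hiso : ∀ x y : X, Φ (h x) (h y) = Φ x y)
    (hstabEo : ∀ x : X, (∀ y ∈ ker ξ, Φ x y = 0) → ∀ y ∈ ker ξ, Φ (h x) y = 0)
    {g : W → W} (hg : ∀ w : W, ξ (h (ξs (υ (g w)))) - g w = w) (v w : W) :
    Bp (υ v) w + Bp (υ v) (g w) + ε * Bp (υ w) (g v) = 0 := by
  set y := ξs (υ (g w))
  have hy : ∀ e ∈ ker ξ, Φ y e = 0 := fun e he => apply_ξs_eq_zero_of_mem_ker hξs _ he
  have hhx : ξ (h (ξs (υ (g v)))) = v + g v := sub_eq_iff_eq_add.mp (hg v)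
  have hhy : ξ (h y) = w + g w := sub_eq_iff_eq_add.mp (hg w)
  have hiso' := hiso (ξs (υ (g v))) y
  rw [apply_eq_pairing_of_orthogonal hΦε hξs hυ1 (hstabEo y hy),
    apply_eq_pairing_of_orthogonal hΦε hξs hυ1 hy, hhx, hhy, hυ1, hυ1] at hiso'
  simp only [map_add, LinearMap.add_apply] at hiso'
  linear_combination hiso' - pairing_υ_comm hΦε hξs hυ1 (g v) w

lemma add_add_τ_eq_zero (hΦε : ∀ x y : X, Φ x y = ε * Φ y x)
    (hBp2 : ∀ w : W, (∀ w' : W', Bp w' w = 0) → w = 0)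
    (hξs : ∀ (w' : W') (x : X), Φ (ξs w') x = Bp w' (ξ x))
    (hυ1 : ∀ w : W, ξ (ξs (υ w)) = w) (hυ2 : ∀ w' : W', υ (ξ (ξs w')) = w')
    {h : X → X} (hiso : ∀ x y : X, Φ (h x) (h y) = Φ x y)
    (hstabEo : ∀ x : X, (∀ y ∈ ker ξ, Φ x y = 0) → ∀ y ∈ ker ξ, Φ (h x) y = 0)
    {g : W → W} (hg : ∀ w : W, ξ (h (ξs (υ (g w)))) - g w = w)
    {gs : W' → W'} (hgs : ∀ (w' : W') (w : W), Bp (gs w') w = Bp w' (g w)) (w : W) :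
    w + g w + ξ (ξs (gs (υ w))) = 0 := by
  refine hBp2 _ fun w' => ?_
  rw [← hυ2 w', map_add, map_add, pairing_τ hΦε hξs hυ1 hgs]
  exact pairing_add_pairing_add_pairing_eq_zero hΦε hξs hυ1 hiso hstabEo hg _ w

lemma symm_mem_ker (hBp2 : ∀ w : W, (∀ w' : W', Bp w' w = 0) → w = 0)
    (hξs : ∀ (w' : W') (x : X), Φ (ξs w') x = Bp w' (ξ x))
    {h : X ≃ₗ[F] X} (hiso : ∀ x y : X, Φ (h x) (h y) = Φ x y)
    (hstabEo : ∀ x : X, (∀ y ∈ ker ξ, Φ x y = 0) → ∀ y ∈ ker ξ, Φ (h x) y = 0)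
    {e : X} (he : e ∈ ker ξ) : h.symm e ∈ ker ξ := by
  refine mem_ker.mpr <| hBp2 _ fun w' => ?_
  rw [← hξs, ← hiso, h.apply_symm_apply]
  exact hstabEo _ (fun y hy => apply_ξs_eq_zero_of_mem_ker hξs w' hy) e he

lemma ξ_symm_section_apply (hBp2 : ∀ w : W, (∀ w' : W', Bp w' w = 0) → w = 0)
    (hξs : ∀ (w' : W') (x : X), Φ (ξs w') x = Bp w' (ξ x)) (hυ1 : ∀ w : W, ξ (ξs (υ w)) = w)
    {h : X ≃ₗ[F] X} (hiso : ∀ x y : X, Φ (h x) (h y) = Φ x y)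
    (hstabEo : ∀ x : X, (∀ y ∈ ker ξ, Φ x y = 0) → ∀ y ∈ ker ξ, Φ (h x) y = 0) (x : X) :
    ξ (h.symm (ξs (υ (ξ x)))) = ξ (h.symm x) := by
  have hmem : ξs (υ (ξ x)) - x ∈ ker ξ := by rw [mem_ker, map_sub, hυ1, sub_self]
  rw [← sub_eq_zero, ← map_sub, ← map_sub]
  exact mem_ker.mp (symm_mem_ker hBp2 hξs hiso hstabEo hmem)

end SectionPairing

theorem gamma_G_properties_general
    (F : Type*) [Field F]
    (W W' X : Type*)
    [AddCommGroup W] [Module F W]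
    [AddCommGroup W'] [Module F W']
    [AddCommGroup X] [Module F X]
    (ε : F)
    (Bp : W' →ₗ[F] W →ₗ[F] F)
    (hBp2 : ∀ w : W, (∀ w' : W', Bp w' w = 0) → w = 0)
    (Φ : X →ₗ[F] X →ₗ[F] F)
    (hΦε : ∀ x y : X, Φ x y = ε * Φ y x)
    (ξ : X →ₗ[F] W)
    (ξs : W' →ₗ[F] X)
    (hξs : ∀ (w' : W') (x : X), Φ (ξs w') x = Bp w' (ξ x))
    (υ : W →ₗ[F] W')
    (hυ1 : ∀ w : W, ξ (ξs (υ w)) = w) (hυ2 : ∀ w' : W', υ (ξ (ξs w')) = w')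
    -- h ∈ M_E : an isometry preserving E = ker ξ and E^⊥
    (h : X ≃ₗ[F] X)
    (hiso : ∀ x y : X, Φ (h x) (h y) = Φ x y)
    (hstabEo : ∀ x : X, (∀ y ∈ LinearMap.ker ξ, Φ x y = 0) →
      ∀ y ∈ LinearMap.ker ξ, Φ (h x) y = 0)
    -- h_G = (Ξ(h − 1))⁻¹, encoding the invertibility of (h − 1)|_{E^⊥} :
    (hG : W ≃ₗ[F] W)
    (hhG2 : ∀ w : W, ξ (h (ξs (υ (hG w)))) - hG w = w)
    -- the adjoint of h_G with respect to the pairing Bp :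
    (hGs : W' →ₗ[F] W')
    (hhGs : ∀ (w' : W') (w : W), Bp (hGs w') w = Bp w' (hG w)) :
    -- (a)  1 + h_G + τ(h_G) = 0
    (∀ w : W, w + hG w + ξ (ξs (hGs (υ w))) = 0) ∧
    -- (b)  h_G · θ(h_G) = −Ξ(h⁻¹), i.e. h_G = −Ξ(h⁻¹) ∘ τ(h_G)
    (∀ w : W, hG w = - ξ (h.symm (ξs (υ (ξ (ξs (hGs (υ w)))))))) := by
  have ha := add_add_τ_eq_zero hΦε hBp2 hξs hυ1 hυ2 hiso hstabEo hhG2 hhGs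
  refine ⟨ha, fun w => ?_⟩
  have hτ : ξ (ξs (hGs (υ w))) = ξ (-h (ξs (υ (hG w)))) := by
    rw [map_neg, sub_eq_iff_eq_add.mp (hhG2 w)]
    exact eq_neg_of_add_eq_zero_right (ha w)
  rw [hτ, ξ_symm_section_apply hBp2 hξs hυ1 hiso hstabEo, map_neg, map_neg, neg_neg,
    h.symm_apply_apply, hυ1]

/-- Let `h ∈ M_E` (an isometry of `X` preserving `E` and `E^⊥`) with `(h − 1)|_{E^⊥}`
invertible, and let `h_G = (Ξ(h−1))⁻¹ ∈ GL(W)`.  Then (a) `1 + h_G + τ(h_G) = 0`, and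
(b) `h_G · θ(h_G) = −Ξ(h⁻¹)` where `θ(g) = τ(g)⁻¹` — equivalently
`h_G = −Ξ(h⁻¹) ∘ τ(h_G)`.  Here `Ξ(A) = ξ A ξ⁺`, `ξ⁺ = ξs ∘ υ`, `τ(g) = υ⁻¹ g* υ`
with `g*` the adjoint of `g` via the pairing `Bp`. -/
theorem gamma_G_properties
    (F : Type*) [Field F] (hchar : (2 : F) ≠ 0)
    (W W' X : Type*)
    [AddCommGroup W] [Module F W] [FiniteDimensional F W]
    [AddCommGroup W'] [Module F W'] [FiniteDimensional F W']
    [AddCommGroup X] [Module F X] [FiniteDimensional F X]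
    (ε : F) (hε : ε = 1 ∨ ε = -1)
    (Bp : W' →ₗ[F] W →ₗ[F] F)
    (hBp1 : ∀ w' : W', (∀ w : W, Bp w' w = 0) → w' = 0)
    (hBp2 : ∀ w : W, (∀ w' : W', Bp w' w = 0) → w = 0)
    (Φ : X →ₗ[F] X →ₗ[F] F)
    (hΦnd : ∀ x : X, (∀ y : X, Φ x y = 0) → x = 0)
    (hΦε : ∀ x y : X, Φ x y = ε * Φ y x)
    (ξ : X →ₗ[F] W) (hξsurj : Function.Surjective ξ)
    (hEnd : ∀ x ∈ LinearMap.ker ξ, (∀ y ∈ LinearMap.ker ξ, Φ x y = 0) → x = 0)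
    (ξs : W' →ₗ[F] X)
    (hξs : ∀ (w' : W') (x : X), Φ (ξs w') x = Bp w' (ξ x))
    (υ : W →ₗ[F] W')
    (hυ1 : ∀ w : W, ξ (ξs (υ w)) = w) (hυ2 : ∀ w' : W', υ (ξ (ξs w')) = w')
    -- h ∈ M_E : an isometry preserving E = ker ξ and E^⊥
    (h : X ≃ₗ[F] X)
    (hiso : ∀ x y : X, Φ (h x) (h y) = Φ x y)
    (hstabE : ∀ e ∈ LinearMap.ker ξ, h e ∈ LinearMap.ker ξ)
    (hstabEo : ∀ x : X, (∀ y ∈ LinearMap.ker ξ, Φ x y = 0) →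
      ∀ y ∈ LinearMap.ker ξ, Φ (h x) y = 0)
    -- h_G = (Ξ(h − 1))⁻¹, encoding the invertibility of (h − 1)|_{E^⊥} :
    (hG : W ≃ₗ[F] W)
    (hhG1 : ∀ w : W, hG (ξ (h (ξs (υ w))) - w) = w)
    (hhG2 : ∀ w : W, ξ (h (ξs (υ (hG w)))) - hG w = w)
    -- the adjoint of h_G with respect to the pairing Bp :
    (hGs : W' →ₗ[F] W')
    (hhGs : ∀ (w' : W') (w : W), Bp (hGs w') w = Bp w' (hG w)) :
    -- (a)  1 + h_G + τ(h_G) = 0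
    (∀ w : W, w + hG w + ξ (ξs (hGs (υ w))) = 0) ∧
    -- (b)  h_G · θ(h_G) = −Ξ(h⁻¹), i.e. h_G = −Ξ(h⁻¹) ∘ τ(h_G)
    (∀ w : W, hG w = - ξ (h.symm (ξs (υ (ξ (ξs (hGs (υ w)))))))) :=
  gamma_G_properties_general F W W' X ε Bp hBp2 Φ hΦε ξ ξs hξs υ hυ1 hυ2 h hiso hstabEo hG hhG2 hGs
    hhGs
end

section
/- Let h ∈ H^E (an isometry of X fixing E pointwise) with (h−1)|_{E^⊥} invertible. Set η(h) = (ξ(h−1)ξ⁺)^{-1} ξξ* : W' → W, and let ξ be as above. Then the pair (ξ, η(h)) satisfies η(h) + η(h)* + ξξ* = 0 (so n(ξ, η(h)) lies in the unipotent radical N), η(h) is invertible, and Norm(ξ, η(h)) = 1 + ξ* η(h)^{-1} ξ = h. In other words, h ↦ n(ξ, η(h)) is a section of the Norm map over such h. -/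
/-!
Since `h` is an isometry fixing `E = ker ξ` pointwise, `h x - x` is orthogonal to `E` for every
`x`, and so is every `ξ* w'`; as `E` is nondegenerate, `h x - x` is therefore determined by its
image under `ξ`. The defining property of `h_G` gives `ξ (h x - x) = ξ ξ* w'` whenever
`η(h) w' = ξ x`, whence `h x = x + ξ* w'`, which is `Norm(ξ, η(h)) = h`. Expanding
`Φ (h y) (h x) = Φ y x` for two such pairs `(x, w')`, `(y, v)` yields `η + η* + ξ ξ* = 0`.
-/

section

variable {F W W' X : Type*} [Field F] [AddCommGroup W] [Module F W] [AddCommGroup W']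
  [Module F W'] [AddCommGroup X] [Module F X]

theorem isometry_sub_self_orthogonal {Φ : X →ₗ[F] X →ₗ[F] F} {h : X → X}
    (hiso : ∀ x y, Φ (h x) (h y) = Φ x y) {y : X} (hy : h y = y) (x : X) :
    Φ (h x - x) y = 0 := by
  rw [map_sub, LinearMap.sub_apply, ← hiso x y, hy, sub_self]

theorem sub_eq_sub_of_fixes_ker {ξ : X →ₗ[F] W} {h : X →ₗ[F] X}
    (hfix : ∀ e ∈ LinearMap.ker ξ, h e = e) {x y : X} (hxy : ξ x = ξ y) :
    h x - x = h y - y := by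
  have hxy' := hfix (x - y) (by rw [LinearMap.mem_ker, map_sub, hxy, sub_self])
  rw [map_sub] at hxy'
  exact sub_eq_sub_iff_sub_eq_sub.mpr hxy'

theorem map_sub_self_eq_of_rightInverse {ξ : X →ₗ[F] W} {s : W → X} (hs : ∀ w, ξ (s w) = w)
    {h : X →ₗ[F] X} (hfix : ∀ e ∈ LinearMap.ker ξ, h e = e) {g : W → W}
    (hg : ∀ w, ξ (h (s (g w))) - g w = w) {x : X} {w : W} (hx : g w = ξ x) :
    ξ (h x - x) = w := by
  have hgw := hg w
  rw [hx] at hgw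
  rw [sub_eq_sub_of_fixes_ker hfix (hs (ξ x)).symm, map_sub, hs]
  exact hgw

theorem eq_add_of_isometry_fixing_ker {Φ : X →ₗ[F] X →ₗ[F] F} {ξ : X →ₗ[F] W}
    (hEnd : ∀ x ∈ LinearMap.ker ξ, (∀ y ∈ LinearMap.ker ξ, Φ x y = 0) → x = 0)
    {Bp : W' →ₗ[F] W →ₗ[F] F} {ξs : W' →ₗ[F] X}
    (hξs : ∀ (w' : W') (x : X), Φ (ξs w') x = Bp w' (ξ x))
    {h : X → X} (hiso : ∀ x y, Φ (h x) (h y) = Φ x y)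
    (hfix : ∀ e ∈ LinearMap.ker ξ, h e = e) {x : X} {w' : W'}
    (hx : ξ (h x - x) = ξ (ξs w')) : h x = x + ξs w' := by
  have hker : h x - x - ξs w' ∈ LinearMap.ker ξ := by
    rw [LinearMap.mem_ker, map_sub, hx, sub_self]
  have horth : ∀ y ∈ LinearMap.ker ξ, Φ (h x - x - ξs w') y = 0 := fun y hy => by
    rw [map_sub, LinearMap.sub_apply, isometry_sub_self_orthogonal hiso (hfix y hy), hξs,
      LinearMap.mem_ker.mp hy, map_zero, sub_zero]
  have hzero := hEnd _ hker horth
  rwa [sub_sub, sub_eq_zero] at hzero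

theorem add_adjoint_add_eq_zero {ε : F} (hε : ε * ε = 1) {Φ : X →ₗ[F] X →ₗ[F] F}
    (hΦε : ∀ x y, Φ x y = ε * Φ y x) {Bp : W' →ₗ[F] W →ₗ[F] F}
    (hBp2 : ∀ w : W, (∀ w' : W', Bp w' w = 0) → w = 0) {ξ : X →ₗ[F] W} {ξs : W' →ₗ[F] X}
    (hξs : ∀ (w' : W') (x : X), Φ (ξs w') x = Bp w' (ξ x)) (hξsurj : Function.Surjective ξ)
    {h : X → X} (hiso : ∀ x y, Φ (h x) (h y) = Φ x y) {η ηs : W' → W}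
    (hηs : ∀ w₁' w₂', ε * Bp w₂' (ηs w₁') = Bp w₁' (η w₂'))
    (hnorm : ∀ x w', η w' = ξ x → h x = x + ξs w') (w' : W') :
    η w' + ηs w' + ξ (ξs w') = 0 := by
  refine hBp2 _ fun v => ?_
  obtain ⟨x, hx⟩ := hξsurj (η w')
  obtain ⟨y, hy⟩ := hξsurj (η v)
  have hΦ := hiso y x
  rw [hnorm x w' hx.symm, hnorm y v hy.symm] at hΦ
  have hcross : Φ y (ξs w') = Bp v (ηs w') := by
    rw [hΦε, hξs, hy, ← hηs, ← mul_assoc, hε, one_mul]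
  simp only [map_add, LinearMap.add_apply, hcross, hξs, hx] at hΦ ⊢
  linear_combination hΦ

end

theorem section_of_norm_general
    (F : Type*) [Field F]
    (W W' X : Type*)
    [AddCommGroup W] [Module F W]
    [AddCommGroup W'] [Module F W']
    [AddCommGroup X] [Module F X]
    (ε : F) (hε : ε = 1 ∨ ε = -1)
    (Bp : W' →ₗ[F] W →ₗ[F] F)
    (hBp2 : ∀ w : W, (∀ w' : W', Bp w' w = 0) → w = 0)
    (Φ : X →ₗ[F] X →ₗ[F] F)
    (hΦε : ∀ x y : X, Φ x y = ε * Φ y x)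
    (ξ : X →ₗ[F] W) (hξsurj : Function.Surjective ξ)
    (hEnd : ∀ x ∈ LinearMap.ker ξ, (∀ y ∈ LinearMap.ker ξ, Φ x y = 0) → x = 0)
    (ξs : W' →ₗ[F] X)
    (hξs : ∀ (w' : W') (x : X), Φ (ξs w') x = Bp w' (ξ x))
    (υ : W →ₗ[F] W')
    (hυ1 : ∀ w : W, ξ (ξs (υ w)) = w) (hυ2 : ∀ w' : W', υ (ξ (ξs w')) = w')
    -- h ∈ H^E with (h − 1)|_{E^⊥} invertible :
    (h : X ≃ₗ[F] X)
    (hiso : ∀ x y : X, Φ (h x) (h y) = Φ x y)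
    (hfixE : ∀ e ∈ LinearMap.ker ξ, h e = e)
    (hG : W ≃ₗ[F] W)
    (hhG2 : ∀ w : W, ξ (h (ξs (υ (hG w)))) - hG w = w)
    -- the adjoint η(h)* of η(h) = h_G ∘ ξ ξ* :
    (ηs : W' →ₗ[F] W)
    (hηs : ∀ w₁' w₂' : W', ε * Bp w₂' (ηs w₁') = Bp w₁' (hG (ξ (ξs w₂')))) :
    -- n(ξ, η(h)) lies in the unipotent radical N :
    (∀ w' : W', hG (ξ (ξs w')) + ηs w' + ξ (ξs w') = 0) ∧
    -- η(h) is invertible :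
    Function.Bijective (fun w' : W' => hG (ξ (ξs w'))) ∧
    -- Norm(ξ, η(h)) = h :
    (∀ (x : X) (w' : W'), hG (ξ (ξs w')) = ξ x → x + ξs w' = h x) := by
  have hε2 : ε * ε = 1 := by rcases hε with rfl | rfl <;> norm_num
  have hnorm : ∀ x w', hG (ξ (ξs w')) = ξ x → h x = x + ξs w' := fun x w' hx =>
    eq_add_of_isometry_fixing_ker hEnd hξs hiso hfixE
      (map_sub_self_eq_of_rightInverse (h := h.toLinearMap) hυ1 hfixE hhG2 hx)
  have hξξs : Function.Bijective fun w' => ξ (ξs w') :=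
    ⟨Function.LeftInverse.injective (g := υ) hυ2, Function.LeftInverse.surjective (g := υ) hυ1⟩
  exact ⟨add_adjoint_add_eq_zero hε2 hΦε hBp2 hξs hξsurj hiso hηs hnorm,
    hG.bijective.comp hξξs, fun x w' hx => (hnorm x w' hx).symm⟩

/-- Section of the Norm map: let `h ∈ H^E` (an isometry of `X` fixing `E = ker ξ`
pointwise) with `(h − 1)|_{E^⊥}` invertible, encoded by `h_G = (Ξ(h−1))⁻¹`.  Set
`η(h) = (ξ (h−1) ξ⁺)⁻¹ ξ ξ* = h_G ∘ (ξ ξ*) : W' → W`.  Then `(ξ, η(h))` satisfies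
`η(h) + η(h)* + ξ ξ* = 0` (so `n(ξ, η(h)) ∈ N`), `η(h)` is invertible, and
`Norm(ξ, η(h)) = 1 + ξ* η(h)⁻¹ ξ = h`. -/
theorem section_of_norm
    (F : Type*) [Field F] (hchar : (2 : F) ≠ 0)
    (W W' X : Type*)
    [AddCommGroup W] [Module F W] [FiniteDimensional F W]
    [AddCommGroup W'] [Module F W'] [FiniteDimensional F W']
    [AddCommGroup X] [Module F X] [FiniteDimensional F X]
    (ε : F) (hε : ε = 1 ∨ ε = -1)
    (Bp : W' →ₗ[F] W →ₗ[F] F)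
    (hBp1 : ∀ w' : W', (∀ w : W, Bp w' w = 0) → w' = 0)
    (hBp2 : ∀ w : W, (∀ w' : W', Bp w' w = 0) → w = 0)
    (Φ : X →ₗ[F] X →ₗ[F] F)
    (hΦnd : ∀ x : X, (∀ y : X, Φ x y = 0) → x = 0)
    (hΦε : ∀ x y : X, Φ x y = ε * Φ y x)
    (ξ : X →ₗ[F] W) (hξsurj : Function.Surjective ξ)
    (hEnd : ∀ x ∈ LinearMap.ker ξ, (∀ y ∈ LinearMap.ker ξ, Φ x y = 0) → x = 0)
    (ξs : W' →ₗ[F] X)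
    (hξs : ∀ (w' : W') (x : X), Φ (ξs w') x = Bp w' (ξ x))
    (υ : W →ₗ[F] W')
    (hυ1 : ∀ w : W, ξ (ξs (υ w)) = w) (hυ2 : ∀ w' : W', υ (ξ (ξs w')) = w')
    -- h ∈ H^E with (h − 1)|_{E^⊥} invertible :
    (h : X ≃ₗ[F] X)
    (hiso : ∀ x y : X, Φ (h x) (h y) = Φ x y)
    (hfixE : ∀ e ∈ LinearMap.ker ξ, h e = e)
    (hG : W ≃ₗ[F] W)
    (hhG1 : ∀ w : W, hG (ξ (h (ξs (υ w))) - w) = w)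
    (hhG2 : ∀ w : W, ξ (h (ξs (υ (hG w)))) - hG w = w)
    -- the adjoint η(h)* of η(h) = h_G ∘ ξ ξ* :
    (ηs : W' →ₗ[F] W)
    (hηs : ∀ w₁' w₂' : W', ε * Bp w₂' (ηs w₁') = Bp w₁' (hG (ξ (ξs w₂')))) :
    -- n(ξ, η(h)) lies in the unipotent radical N :
    (∀ w' : W', hG (ξ (ξs w')) + ηs w' + ξ (ξs w') = 0) ∧
    -- η(h) is invertible :
    Function.Bijective (fun w' : W' => hG (ξ (ξs w'))) ∧
    -- Norm(ξ, η(h)) = h :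
    (∀ (x : X) (w' : W'), hG (ξ (ξs w')) = ξ x → x + ξs w' = h x) :=
  section_of_norm_general F W W' X ε hε Bp hBp2 Φ hΦε ξ hξsurj hEnd ξs hξs υ hυ1 hυ2 h hiso hfixE hG
    hhG2 ηs hηs
end
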